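/- arXiv:1801.09654 — 10 statements merged into one kernel-verified Lean document; each statement's English description precedes it below -/
import Mathlib

section
/- If the quantum walk U(t) = exp(-itA) on a graph with symmetric adjacency matrix A satisfies U(τ)e_a = α e_a + β e_b with |α|²+|β|²=1 and β ≠ 0, then U(τ)_{b,b} = -conj(α)β/conj(β) and U(τ)_{a,b} = β, so (−conj(α)β/conj(β), β)-revival occurs from b to a at time τ. -/
open Matrix Complex

/-- Continuous-time quantum walk `U(t) = exp(-itA)` of a real (weighted) adjacency matrix. -/
noncomputable def qwalk {V : Type*} [Fintype V] [DecidableEq V]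
    (A : Matrix V V ℝ) (t : ℝ) : Matrix V V ℂ :=
  NormedSpace.exp ((-(Complex.I * (t : ℂ))) • A.map (fun x => (x : ℂ)))

/-- Characteristic (standard basis) vector of a vertex, over `ℂ`. -/
noncomputable def eC {V : Type*} [DecidableEq V] (a : V) : V → ℂ := Pi.single a 1

lemma qwalk_symm {n : ℕ} (A : Matrix (Fin n) (Fin n) ℝ) (hA : A.IsSymm) (τ : ℝ) :
    (qwalk A τ)ᵀ = qwalk A τ := by
  unfold qwalk
  rw [← Matrix.exp_transpose]
  congr 1
  rw [transpose_smul]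
  congr 1
  ext i j
  simp [hA.apply]

lemma qwalk_unitary {n : ℕ} (A : Matrix (Fin n) (Fin n) ℝ) (hA : A.IsSymm) (τ : ℝ) :
    (qwalk A τ)ᴴ * qwalk A τ = 1 := by
  set M := ((-(Complex.I * (τ : ℂ))) • A.map (fun x => (x : ℂ))) with hM
  have hMH : Mᴴ = -M := by
    rw [hM, conjTranspose_smul]
    ext i j
    simp [hA.apply]
  unfold qwalk
  rw [← Matrix.exp_conjTranspose, ← hM, hMH,
    ← Matrix.exp_add_of_commute _ _ ((Commute.refl M).neg_left), neg_add_cancel]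
  exact NormedSpace.exp_zero

theorem stmt0 {n : ℕ} (A : Matrix (Fin n) (Fin n) ℝ) (hA : A.IsSymm)
    (a b : Fin n) (hab : a ≠ b) (τ : ℝ) (α β : ℂ) (hβ : β ≠ 0)
    (hnorm : ‖α‖ ^ 2 + ‖β‖ ^ 2 = 1)
    (hrev : (qwalk A τ) *ᵥ eC a = α • eC a + β • eC b) :
    (qwalk A τ) b b = -((starRingEnd ℂ) α * β / (starRingEnd ℂ) β) ∧
    (qwalk A τ) a b = β ∧
    (qwalk A τ) *ᵥ eC b =
      (-((starRingEnd ℂ) α * β / (starRingEnd ℂ) β)) • eC b + β • eC a := by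
  set U := qwalk A τ with hUdef
  have hβ' : (starRingEnd ℂ) β ≠ 0 := by simpa using hβ
  have hsymm := qwalk_symm A hA τ
  have hunit := qwalk_unitary A hA τ
  rw [← hUdef] at hsymm hunit
  have hcol : ∀ x, U x a = α * ((Pi.single a 1 : Fin n → ℂ) x) + β * ((Pi.single b 1 : Fin n → ℂ) x) := by
    intro x
    have := congrFun hrev x
    simpa [eC, mulVec, dotProduct, Pi.single_apply, mul_ite] using this
  have hUba : U b a = β := by simpa [Pi.single_apply, hab.symm] using hcol b
  have hUab : U a b = β := by
    calc U a b = Uᵀ b a := rfl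
    _ = U b a := by rw [hsymm]
    _ = β := hUba
  -- orthogonality of columns a and b
  have horth : (starRingEnd ℂ) α * U a b + (starRingEnd ℂ) β * U b b = 0 := by
    have h := congrFun (congrFun hunit a) b
    rw [Matrix.mul_apply] at h
    simp only [conjTranspose_apply, Matrix.one_apply, if_neg hab] at h
    have key : ∀ x, star (U x a) * U x b =
        (if x = a then (starRingEnd ℂ) α * U a b else 0) +
        (if x = b then (starRingEnd ℂ) β * U b b else 0) := by
      intro x
      rw [hcol x]
      by_cases h1 : x = a
      · subst h1
        simp [Pi.single_apply, hab]
      · by_cases h2 : x = b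
        · subst h2
          simp [Pi.single_apply, hab.symm, h1]
        · simp [Pi.single_apply, h1, h2]
    rw [Finset.sum_congr rfl (fun x _ => key x), Finset.sum_add_distrib,
      Finset.sum_ite_eq', Finset.sum_ite_eq'] at h
    simpa using h
  have hUbb : U b b = -((starRingEnd ℂ) α * β / (starRingEnd ℂ) β) := by
    rw [hUab] at horth
    field_simp
    linear_combination horth
  -- norm of column b
  have hdiag : ∑ x, Complex.normSq (U x b) = 1 := by
    have h := congrFun (congrFun hunit b) b
    rw [Matrix.mul_apply] at h
    simp only [conjTranspose_apply, Matrix.one_apply_eq] at h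
    have : ((∑ x, Complex.normSq (U x b) : ℝ) : ℂ) = 1 := by
      push_cast
      rw [← h]
      exact Finset.sum_congr rfl fun x _ => by
        rw [Complex.normSq_eq_conj_mul_self]; rfl
    exact_mod_cast this
  have hnsβ : Complex.normSq β ≠ 0 := by simpa using hβ
  have hrest : ∑ x ∈ (Finset.univ.erase b).erase a, Complex.normSq (U x b) = 0 := by
    have hb : b ∈ (Finset.univ : Finset (Fin n)) := Finset.mem_univ b
    have ha : a ∈ Finset.univ.erase b := Finset.mem_erase.2 ⟨hab, Finset.mem_univ a⟩
    rw [← Finset.add_sum_erase _ _ hb, ← Finset.add_sum_erase _ _ ha] at hdiag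
    have h1 : Complex.normSq (U b b) = Complex.normSq α := by
      rw [hUbb, Complex.normSq_neg, Complex.normSq_div, Complex.normSq_mul, Complex.normSq_conj,
        Complex.normSq_conj, mul_div_assoc, div_self hnsβ, mul_one]
    have h2 : Complex.normSq (U a b) = Complex.normSq β := by rw [hUab]
    rw [h1, h2] at hdiag
    have hα : Complex.normSq α = ‖α‖ ^ 2 := by rw [Complex.sq_norm]
    have hβ2 : Complex.normSq β = ‖β‖ ^ 2 := by rw [Complex.sq_norm]
    rw [hα, hβ2] at hdiag
    linarith
  have hzero : ∀ x, x ≠ a → x ≠ b → U x b = 0 := by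
    intro x hxa hxb
    have hx : x ∈ (Finset.univ.erase b).erase a :=
      Finset.mem_erase.2 ⟨hxa, Finset.mem_erase.2 ⟨hxb, Finset.mem_univ x⟩⟩
    have := (Finset.sum_eq_zero_iff_of_nonneg
      (fun y _ => Complex.normSq_nonneg (U y b))).1 hrest x hx
    exact Complex.normSq_eq_zero.1 this
  refine ⟨hUbb, hUab, ?_⟩
  funext x
  have hx : (U *ᵥ eC b) x = U x b := by
    simp [eC, mulVec, dotProduct, Pi.single_apply, mul_ite]
  rw [hx]
  by_cases h1 : x = b
  · subst h1
    simp [eC, Pi.single_apply, hab.symm, hUbb]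
  · by_cases h2 : x = a
    · subst h2
      simp [eC, Pi.single_apply, hab, hUab]
    · simp [eC, Pi.single_apply, h1, h2, hzero x h2 h1]
end

section
/- If (α,β)-revival occurs between vertices a and b of a graph at time τ (with β ≠ 0), then a and b are parallel vertices: for every eigenvalue θ_r of the adjacency matrix with spectral projector E_r, the vectors E_r e_a and E_r e_b are parallel (linearly dependent). -/
open Matrix Complex BigOperators

/-- Characteristic (standard basis) vector of a vertex, over `ℝ`. -/
noncomputable def eR {V : Type*} [DecidableEq V] (a : V) : V → ℝ := Pi.single a 1

/-!
From `A = ∑ θ_r E_r` and the orthogonality of the idempotents, `E_r A = θ_r E_r`, hence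
`E_r U(τ) = γ E_r` with `γ = exp(-iτθ_r)`. Applying `E_r` to the revival equation gives
`(γ - α) E_r e_a = β E_r e_b`. Since `β ≠ 0` and both vectors are real,
`E_r e_b = Re((γ - α) / β) E_r e_a`.
-/

open NormedSpace in
theorem mul_exp_eq_exp_smul_of_mul_eq_smul {𝕂 𝔸 : Type*} [RCLike 𝕂] [NormedRing 𝔸]
    [NormedAlgebra 𝕂 𝔸] [CompleteSpace 𝔸] {x a : 𝔸} {θ : 𝕂} (h : x * a = θ • x) :
    x * exp a = exp θ • x := by
  let : NormedAlgebra ℚ 𝔸 := NormedAlgebra.restrictScalars ℚ 𝕂 𝔸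
  have hsc : SemiconjBy x a (algebraMap 𝕂 𝔸 θ) := by
    rw [SemiconjBy, h, Algebra.smul_def]
  rw [hsc.exp_right, ← algebraMap_exp_comm, Algebra.smul_def]

open NormedSpace in
theorem Matrix.mul_exp_eq_exp_smul_of_mul_eq_smul {ι 𝕂 : Type*} [Fintype ι] [DecidableEq ι]
    [RCLike 𝕂] {M B : Matrix ι ι 𝕂} {θ : 𝕂} (h : M * B = θ • M) :
    M * exp B = exp θ • M := by
  open scoped Norms.Operator in exact _root_.mul_exp_eq_exp_smul_of_mul_eq_smul h

theorem mul_eq_smul_of_eq_sum_smul {𝕜 R ι : Type*} [CommSemiring 𝕜] [Semiring R] [Algebra 𝕜 R]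
    [Fintype ι] [DecidableEq ι] {A : R} {θ : ι → 𝕜} {E : ι → R} (hdecomp : A = ∑ r, θ r • E r)
    (horth : ∀ r s, E r * E s = if r = s then E r else 0) (s : ι) :
    E s * A = θ s • E s := by
  simp only [hdecomp, Finset.mul_sum, mul_smul_comm, horth, smul_ite, smul_zero,
    Finset.sum_ite_eq, Finset.mem_univ, if_true]

theorem Matrix.map_ofReal_mulVec_eC {ι : Type*} [Fintype ι] [DecidableEq ι]
    (M : Matrix ι ι ℝ) (x : ι) :
    M.map ((↑) : ℝ → ℂ) *ᵥ eC x = fun i => ((M *ᵥ eR x) i : ℂ) := by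
  ext i
  simp [eC, eR]

theorem exists_nontrivial_relation_of_mul_eq_mul {ι : Type*} {u v : ι → ℝ} {z w : ℂ}
    (hw : w ≠ 0) (h : ∀ i, z * u i = w * v i) :
    ∃ c d : ℝ, ¬ (c = 0 ∧ d = 0) ∧ c • u + d • v = 0 := by
  refine ⟨(z / w).re, -1, by simp, funext fun i => ?_⟩
  have hv : (v i : ℂ) = u i * (z / w) := by
    field_simp
    linear_combination (h i).symm
  have hv_re := congrArg Complex.re hv
  simp only [ofReal_re, re_ofReal_mul] at hv_re
  simp [hv_re, mul_comm]

theorem stmt1_general {n m : ℕ} (A : Matrix (Fin n) (Fin n) ℝ)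
    (θ : Fin m → ℝ) (E : Fin m → Matrix (Fin n) (Fin n) ℝ)
    (hdecomp : A = ∑ r, θ r • E r)
    (horth : ∀ r s, E r * E s = if r = s then E r else 0)
    (a b : Fin n) (τ : ℝ) (α β : ℂ) (hβ : β ≠ 0)
    (hrev : (qwalk A τ) *ᵥ eC a = α • eC a + β • eC b) :
    ∀ r, ∃ c d : ℝ, ¬ (c = 0 ∧ d = 0) ∧
      c • (E r *ᵥ eR a) + d • (E r *ᵥ eR b) = 0 := by
  intro s
  set F := (E s).map ((↑) : ℝ → ℂ)
  have hFA : F * A.map (↑) = (θ s : ℂ) • F := by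
    have h := congrArg (Matrix.map · ofRealHom) (mul_eq_smul_of_eq_sum_smul hdecomp horth s)
    simp only [Matrix.map_mul] at h
    rw [show F * A.map (↑) = _ from h]
    ext
    simp [F]
  set γ := NormedSpace.exp (-(I * τ) * θ s)
  have hFU : F * qwalk A τ = γ • F := by
    refine Matrix.mul_exp_eq_exp_smul_of_mul_eq_smul ?_
    rw [mul_smul_comm, hFA, smul_smul]
  have hcol (x : Fin n) : F *ᵥ eC x = fun i => ((E s *ᵥ eR x) i : ℂ) :=
    (E s).map_ofReal_mulVec_eC x
  refine exists_nontrivial_relation_of_mul_eq_mul (z := γ - α) hβ fun i => ?_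
  have hrev_i := congrFun (congrArg (F *ᵥ ·) hrev) i
  simp only [mulVec_mulVec, hFU, smul_mulVec, mulVec_add, mulVec_smul,
    hcol, Pi.smul_apply, smul_eq_mul, Pi.add_apply] at hrev_i
  linear_combination hrev_i

/-- If (α,β)-revival occurs from a to b, then a and b are parallel vertices:
for each spectral projector E r, the vectors E r e_a and E r e_b are linearly dependent. -/
theorem stmt1 {n m : ℕ} (A : Matrix (Fin n) (Fin n) ℝ) (hA : A.IsSymm)
    (θ : Fin m → ℝ) (E : Fin m → Matrix (Fin n) (Fin n) ℝ)
    (hdecomp : A = ∑ r, θ r • E r)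
    (hsum : ∑ r, E r = 1)
    (hsymm : ∀ r, (E r).IsSymm)
    (horth : ∀ r s, E r * E s = if r = s then E r else 0)
    (a b : Fin n) (hab : a ≠ b) (τ : ℝ) (α β : ℂ) (hβ : β ≠ 0)
    (hnorm : ‖α‖ ^ 2 + ‖β‖ ^ 2 = 1)
    (hrev : (qwalk A τ) *ᵥ eC a = α • eC a + β • eC b) :
    ∀ r, ∃ c d : ℝ, ¬ (c = 0 ∧ d = 0) ∧
      c • (E r *ᵥ eR a) + d • (E r *ᵥ eR b) = 0 :=
  stmt1_general A θ E hdecomp horth a b τ α β hβ hrev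
end

section
/- Suppose (α,β)-revival occurs from a to b at time τ and a,b are strongly cospectral (E_r e_a = ± E_r e_b for all r). Then there exist real γ, ζ with α = e^{iζ} cos γ and β = i e^{iζ} sin γ. -/
open Matrix Complex BigOperators

/-!
Write `U = qwalk A τ`. Since `A = ∑ θ_r E_r` for complete orthogonal idempotents `E_r`,
`U = ∑ exp(-iτθ_r) E_r`; strong cospectrality gives `(E_r)_{aa} = (E_r)_{bb}`, hence
`U_{bb} = U_{aa} = α`, and `A` symmetric makes `U` symmetric, so `U_{ab} = U_{ba} = β`.
Orthogonality of columns `a` and `b` of the unitary `U` then reads `ᾱβ + β̄α = 0`, so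
`α + β` and `α - β` are unimodular, say `e^{i(ζ+γ)}` and `e^{i(ζ-γ)}`; half their sum and
difference are `e^{iζ} cos γ` and `i e^{iζ} sin γ`.
-/
namespace CompleteOrthogonalIdempotents

variable {𝕂 𝔸 ι : Type*} [RCLike 𝕂] [Ring 𝔸] [Algebra 𝕂 𝔸] [Fintype ι] {e : ι → 𝔸}

def piAlgHom (he : CompleteOrthogonalIdempotents e) : (ι → 𝕂) →ₐ[𝕂] 𝔸 :=
  AlgHom.ofLinearMap (Fintype.linearCombination 𝕂 e)
    (by simp [Fintype.linearCombination_apply, he.complete])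
    (fun x y => by
      classical
      simp only [Fintype.linearCombination_apply, Finset.sum_mul_sum, smul_mul_smul_comm,
        he.mul_eq, smul_ite, smul_zero, Finset.sum_ite_eq, Finset.mem_univ, if_true,
        Pi.mul_apply])

theorem piAlgHom_apply (he : CompleteOrthogonalIdempotents e) (x : ι → 𝕂) :
    he.piAlgHom x = ∑ i, x i • e i := rfl

variable [TopologicalSpace 𝔸] [IsTopologicalRing 𝔸] [ContinuousSMul 𝕂 𝔸] [T2Space 𝔸]

theorem exp_sum_smul (he : CompleteOrthogonalIdempotents e) (c : ι → 𝕂) :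
    NormedSpace.exp (∑ i, c i • e i) = ∑ i, NormedSpace.exp (c i) • e i := by
  let φ : (ι → 𝕂) →L[𝕂] 𝔸 :=
    ⟨he.piAlgHom.toLinearMap, continuous_finsetSum _ fun i _ =>
      (continuous_apply i).smul continuous_const⟩
  have hφ : ∀ x, φ x = he.piAlgHom x := fun _ => rfl
  calc NormedSpace.exp (∑ i, c i • e i)
      = ∑' n : ℕ, (n.factorial⁻¹ : 𝕂) • he.piAlgHom c ^ n := by
        rw [NormedSpace.exp_eq_tsum 𝕂, piAlgHom_apply]
    _ = φ (NormedSpace.exp c) := by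
        rw [NormedSpace.exp_eq_tsum 𝕂, φ.map_tsum (NormedSpace.expSeries_summable' c)]
        simp only [hφ, map_smul, map_pow]
    _ = ∑ i, NormedSpace.exp (c i) • e i := by
        rw [hφ, piAlgHom_apply]
        simp only [Pi.coe_exp]

end CompleteOrthogonalIdempotents

section QuantumWalk

variable {V ι : Type*} [Fintype V] [DecidableEq V] [Fintype ι]

theorem qwalk_apply_eq_sum {A : Matrix V V ℝ} {θ : ι → ℝ} {E : ι → Matrix V V ℝ}
    (hE : CompleteOrthogonalIdempotents E) (hA : A = ∑ r, θ r • E r) (t : ℝ) (i j : V) :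
    qwalk A t i j = ∑ r, Complex.exp (-(Complex.I * t) * θ r) * E r i j := by
  let P : ι → Matrix V V ℂ := (Algebra.ofId ℝ ℂ).mapMatrix ∘ E
  have hP : CompleteOrthogonalIdempotents P := hE.map _
  have hAP : A.map (fun x => (x : ℂ)) = ∑ r, (θ r : ℂ) • P r := by
    ext k l
    simp [hA, P, Matrix.sum_apply]
  rw [qwalk, hAP, Finset.smul_sum]
  simp_rw [smul_smul]
  rw [hP.exp_sum_smul, ← Complex.exp_eq_exp_ℂ]
  simp [P, Matrix.sum_apply]

theorem qwalk_isSymm {A : Matrix V V ℝ} (hA : A.IsSymm) (t : ℝ) : (qwalk A t).IsSymm :=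
  ((hA.map _).smul _).exp

theorem qwalk_mem_unitaryGroup {A : Matrix V V ℝ} (hA : A.IsSymm) (t : ℝ) :
    qwalk A t ∈ Matrix.unitaryGroup V ℂ := by
  have hsa : IsSelfAdjoint (A.map fun x => (x : ℂ)) :=
    (Matrix.isHermitian_iff_isSymm.mpr hA).map _ fun x => (Complex.conj_ofReal x).symm
  have hskew : -(Complex.I * t) ∈ skewAdjoint ℂ := by
    simp [skewAdjoint.mem_iff]
  rw [Matrix.mem_unitaryGroup_iff', Matrix.star_eq_conjTranspose, qwalk,
    ← Matrix.exp_conjTranspose, ← Matrix.star_eq_conjTranspose,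
    skewAdjoint.mem_iff.mp (hsa.smul_mem_skewAdjoint hskew), Matrix.exp_neg]
  exact Matrix.nonsing_inv_mul _ ((Matrix.isUnit_iff_isUnit_det _).mp (Matrix.isUnit_exp _))

end QuantumWalk

theorem Matrix.IsSymm.apply_self_eq_of_mulVec_single_eq_or_neg {V R : Type*} [Fintype V]
    [DecidableEq V] [CommRing R] {M : Matrix V V R} (hM : M.IsSymm) {a b : V}
    (h : M *ᵥ Pi.single a 1 = M *ᵥ Pi.single b 1 ∨ M *ᵥ Pi.single a 1 = -(M *ᵥ Pi.single b 1)) :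
    M a a = M b b := by
  have hab : M a b = M b a := hM.apply b a
  rcases h with h | h
  · have ha := congrFun h a
    have hb := congrFun h b
    simp only [Matrix.mulVec_single_one, Matrix.col_apply] at ha hb
    rw [ha, hab, hb]
  · have ha := congrFun h a
    have hb := congrFun h b
    simp only [Matrix.mulVec_single_one, Matrix.col_apply, Pi.neg_apply] at ha hb
    rw [ha, hab, hb, neg_neg]

theorem star_mul_add_star_mul_eq_zero_of_mulVec_single_eq {V : Type*} [Fintype V]
    [DecidableEq V] {U : Matrix V V ℂ} (hU : U ∈ Matrix.unitaryGroup V ℂ) {a b : V} (hab : a ≠ b)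
    (hsymm : U a b = U b a) (hdiag : U a a = U b b) {α β : ℂ}
    (hrev : U *ᵥ eC a = α • eC a + β • eC b) :
    star α * β + star β * α = 0 := by
  have hcol : ∀ x, U x a = α * eC a x + β * eC b x := fun x => by
    simpa [eC, Matrix.mulVec_single] using congrFun hrev x
  have haa : U a a = α := by simpa [eC, Pi.single_apply, hab.symm] using hcol a
  have hba : U b a = β := by simpa [eC, Pi.single_apply, hab] using hcol b
  have h := congrFun (congrFun (Matrix.mem_unitaryGroup_iff'.mp hU) a) b
  rw [Matrix.one_apply_ne hab, Matrix.star_eq_conjTranspose, Matrix.mul_apply] at h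
  simp only [Matrix.conjTranspose_apply, hcol] at h
  simpa [eC, Pi.single_apply, Finset.sum_add_distrib, add_mul, apply_ite (starRingEnd ℂ), ite_mul,
    hsymm, hba, ← hdiag, haa] using h

namespace Complex

theorem norm_add_eq_one_and_norm_sub_eq_one {α β : ℂ} (hnorm : ‖α‖ ^ 2 + ‖β‖ ^ 2 = 1)
    (horth : star α * β + star β * α = 0) : ‖α + β‖ = 1 ∧ ‖α - β‖ = 1 := by
  have hre : (α * (starRingEnd ℂ) β).re = 0 := by
    simpa [mul_comm] using congrArg re horth
  simp only [← pow_eq_one_iff_of_nonneg (norm_nonneg _) two_ne_zero]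
  rw [← normSq_eq_norm_sq, ← normSq_eq_norm_sq, normSq_add, normSq_sub, hre, normSq_eq_norm_sq,
    normSq_eq_norm_sq, mul_zero, add_zero, sub_zero]
  exact ⟨hnorm, hnorm⟩

theorem exists_eq_exp_mul_cos_and_eq_I_mul_exp_mul_sin {α β : ℂ} (hadd : ‖α + β‖ = 1)
    (hsub : ‖α - β‖ = 1) :
    ∃ γ ζ : ℝ, α = exp (I * ζ) * Real.cos γ ∧ β = I * exp (I * ζ) * Real.sin γ := by
  obtain ⟨γ, ζ, hφ, hψ⟩ : ∃ γ ζ : ℝ, arg (α + β) = ζ + γ ∧ arg (α - β) = ζ - γ :=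
    ⟨(arg (α + β) - arg (α - β)) / 2, (arg (α + β) + arg (α - β)) / 2, by ring, by ring⟩
  have h₁ : α + β = exp (I * ζ) * exp (γ * I) := by
    rw [← exp_add, ← norm_mul_exp_arg_mul_I (α + β), hadd, hφ]
    push_cast
    ring_nf
  have h₂ : α - β = exp (I * ζ) * exp (-γ * I) := by
    rw [← exp_add, ← norm_mul_exp_arg_mul_I (α - β), hsub, hψ]
    push_cast
    ring_nf
  rw [exp_mul_I] at h₁ h₂
  rw [cos_neg, sin_neg] at h₂
  refine ⟨γ, ζ, ?_, ?_⟩ <;> push_cast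
  · linear_combination (h₁ + h₂) / 2
  · linear_combination (h₁ - h₂) / 2

end Complex

theorem stmt2_general {n m : ℕ} (A : Matrix (Fin n) (Fin n) ℝ) (hA : A.IsSymm)
    (θ : Fin m → ℝ) (E : Fin m → Matrix (Fin n) (Fin n) ℝ)
    (hdecomp : A = ∑ r, θ r • E r)
    (hsum : ∑ r, E r = 1)
    (hsymm : ∀ r, (E r).IsSymm)
    (horth : ∀ r s, E r * E s = if r = s then E r else 0)
    (a b : Fin n) (hab : a ≠ b)
    (hsc : ∀ r, E r *ᵥ eR a = E r *ᵥ eR b ∨ E r *ᵥ eR a = -(E r *ᵥ eR b))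
    (τ : ℝ) (α β : ℂ)
    (hnorm : ‖α‖ ^ 2 + ‖β‖ ^ 2 = 1)
    (hrev : (qwalk A τ) *ᵥ eC a = α • eC a + β • eC b) :
    ∃ γ ζ : ℝ, α = Complex.exp (Complex.I * ζ) * Real.cos γ ∧
      β = Complex.I * Complex.exp (Complex.I * ζ) * Real.sin γ := by
  have hE : CompleteOrthogonalIdempotents E := ⟨OrthogonalIdempotents.iff_mul_eq.mpr horth, hsum⟩
  have hdiag : qwalk A τ a a = qwalk A τ b b := by
    simp only [qwalk_apply_eq_sum hE hdecomp,
      fun r => (hsymm r).apply_self_eq_of_mulVec_single_eq_or_neg (hsc r)]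
  have horthαβ : star α * β + star β * α = 0 :=
    star_mul_add_star_mul_eq_zero_of_mulVec_single_eq (qwalk_mem_unitaryGroup hA τ) hab
      ((qwalk_isSymm hA τ).apply b a) hdiag hrev
  obtain ⟨hadd, hsub⟩ := Complex.norm_add_eq_one_and_norm_sub_eq_one hnorm horthαβ
  exact Complex.exists_eq_exp_mul_cos_and_eq_I_mul_exp_mul_sin hadd hsub

/-- If (α,β)-revival occurs from a to b and a,b are strongly cospectral, then
α = e^{iζ} cos γ and β = i e^{iζ} sin γ for some real γ, ζ. -/
theorem stmt2 {n m : ℕ} (A : Matrix (Fin n) (Fin n) ℝ) (hA : A.IsSymm)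
    (θ : Fin m → ℝ) (E : Fin m → Matrix (Fin n) (Fin n) ℝ)
    (hdecomp : A = ∑ r, θ r • E r)
    (hsum : ∑ r, E r = 1)
    (hsymm : ∀ r, (E r).IsSymm)
    (horth : ∀ r s, E r * E s = if r = s then E r else 0)
    (a b : Fin n) (hab : a ≠ b)
    (hsc : ∀ r, E r *ᵥ eR a = E r *ᵥ eR b ∨ E r *ᵥ eR a = -(E r *ᵥ eR b))
    (τ : ℝ) (α β : ℂ) (hβ : β ≠ 0)
    (hnorm : ‖α‖ ^ 2 + ‖β‖ ^ 2 = 1)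
    (hrev : (qwalk A τ) *ᵥ eC a = α • eC a + β • eC b) :
    ∃ γ ζ : ℝ, α = Complex.exp (Complex.I * ζ) * Real.cos γ ∧
      β = Complex.I * Complex.exp (Complex.I * ζ) * Real.sin γ :=
  stmt2_general A hA θ E hdecomp hsum hsymm horth a b hab hsc τ α β hnorm hrev
end

section
/- Let a,b be strongly cospectral vertices of a connected graph with largest eigenvalue θ_0. Then (e^{iζ}cos γ, i e^{iζ} sin γ)-revival occurs from a to b at time τ if and only if ζ = -τθ_0 - γ and for every eigenvalue θ_r in the eigenvalue support of a: τ(θ_0 - θ_r) ≡ 0 (mod 2π) when E_r e_a = E_r e_b, and τ(θ_0 - θ_r) ≡ -2γ (mod 2π) when E_r e_a = -E_r e_b. -/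
open Matrix Complex BigOperators

/-! Since `A = ∑ θ_r E_r` with the `E_r` complete orthogonal idempotents, the walk is
`U(τ) = ∑ e^{-iτθ_r} E_r`, and applying each `E_r` splits the revival equation
`U(τ) e_a = α e_a + β e_b`, where `(α, β) = (e^{iζ} cos γ, i e^{iζ} sin γ)`, into
`e^{-iτθ_r} E_r e_a = α E_r e_a + β E_r e_b`. Strong cospectrality gives `E_r e_b = ±E_r e_a`,
so on the support of `a` this reads `e^{-iτθ_r} = α ± β = e^{i(ζ ± γ)}`. The Perron eigenvalue
lies in the positive support, which fixes `ζ ≡ -τθ₀ - γ`; the remaining conditions are then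
congruences for the differences `τ(θ₀ - θ_r)`. -/

open scoped Real

theorem smul_eq_smul_add_smul_iff {K M : Type*} [Field K] [CharZero K] [AddCommGroup M]
    [Module K M] {w u : M} (hwu : w = u ∨ w = -u) (z α β : K) :
    z • w = α • w + β • u ↔ (w ≠ 0 → (w = u → z = α + β) ∧ (w = -u → z = α - β)) := by
  rcases eq_or_ne w 0 with rfl | hw
  · obtain rfl : u = 0 := by simpa [eq_comm (a := (0 : M))] using hwu
    simp
  have hw' : w ≠ -w := fun h => hw (by
    rwa [eq_neg_iff_add_eq_zero, ← two_smul K, smul_eq_zero, or_iff_right two_ne_zero] at h)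
  obtain rfl | rfl : u = w ∨ u = -w := hwu.imp Eq.symm fun h => by rw [h, neg_neg]
  · simp [hw, hw', ← add_smul, smul_left_inj hw]
  · simp [hw, hw', ← sub_eq_add_neg, ← sub_smul, smul_left_inj hw]

theorem map_ofReal_mulVec {V : Type*} [Fintype V] (M : Matrix V V ℝ) (v : V → ℝ) :
    M.map (fun x => (x : ℂ)) *ᵥ ofRealHom.compLeft V v = ofRealHom.compLeft V (M *ᵥ v) :=
  funext fun i => (RingHom.map_mulVec ofRealHom M v i).symm

theorem eC_eq_ofReal_eR {V : Type*} [DecidableEq V] (a : V) :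
    eC a = ofRealHom.compLeft V (eR a) := by
  funext v
  simp [eC, eR, Pi.single_apply, apply_ite]

namespace OrthogonalIdempotents

variable {ι R A : Type*} [Fintype ι] [CommSemiring R] [Semiring A] [Algebra R A] {e : ι → A}

theorem sum_smul_mul_sum_smul (he : OrthogonalIdempotents e) (a b : ι → R) :
    (∑ i, a i • e i) * ∑ i, b i • e i = ∑ i, (a i * b i) • e i := by
  classical
  simp only [Finset.sum_mul_sum, smul_mul_smul_comm, he.mul_eq, smul_ite, smul_zero,
    Finset.sum_ite_eq, Finset.mem_univ, if_true]

theorem mul_sum_smul (he : OrthogonalIdempotents e) (a : ι → R) (j : ι) :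
    e j * ∑ i, a i • e i = a j • e j := by
  classical
  simp only [Finset.mul_sum, mul_smul_comm, he.mul_eq, smul_ite, smul_zero,
    Finset.sum_ite_eq, Finset.mem_univ, if_true]

end OrthogonalIdempotents

namespace CompleteOrthogonalIdempotents

section

variable {ι R A : Type*} [Fintype ι] [CommSemiring R] [Semiring A] [Algebra R A] {e : ι → A}

theorem sum_smul_pow (he : CompleteOrthogonalIdempotents e) (a : ι → R) (k : ℕ) :
    (∑ i, a i • e i) ^ k = ∑ i, (a i ^ k) • e i := by
  induction k with
  | zero => simp [he.complete]
  | succ k ih => rw [pow_succ, ih, he.sum_smul_mul_sum_smul]; simp_rw [pow_succ]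

end

theorem exp_sum_smul_s3 {ι A : Type*} [Fintype ι] [Ring A] [Algebra ℂ A] [TopologicalSpace A]
    [IsTopologicalRing A] [ContinuousSMul ℂ A] [T2Space A] {e : ι → A}
    (he : CompleteOrthogonalIdempotents e) (c : ι → ℂ) :
    NormedSpace.exp (∑ i, c i • e i) = ∑ i, Complex.exp (c i) • e i := by
  rw [NormedSpace.exp_eq_tsum ℂ]
  refine HasSum.tsum_eq ?_
  simp_rw [he.sum_smul_pow, Finset.smul_sum]
  refine hasSum_sum fun i _ => ?_
  simpa only [smul_assoc, Complex.exp_eq_exp_ℂ] using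
    (NormedSpace.exp_series_hasSum_exp' (𝕂 := ℂ) (c i)).smul_const (e i)

section

variable {ι V : Type*} [Fintype ι] [Fintype V] [DecidableEq V]

theorem eq_iff_forall_mulVec_eq {R : Type*} [Semiring R] {e : ι → Matrix V V R}
    (he : CompleteOrthogonalIdempotents e) {v w : V → R} :
    v = w ↔ ∀ i, e i *ᵥ v = e i *ᵥ w := by
  refine ⟨fun h i => h ▸ rfl, fun h => ?_⟩
  rw [← one_mulVec v, ← one_mulVec w, ← he.complete, sum_mulVec, sum_mulVec]
  exact Finset.sum_congr rfl fun i _ => h i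

theorem sum_smul_mulVec_eq_iff {K : Type*} [Field K] [CharZero K] {e : ι → Matrix V V K}
    (he : CompleteOrthogonalIdempotents e) (z : ι → K) (α β : K) {x y : V → K}
    (hxy : ∀ i, e i *ᵥ x = e i *ᵥ y ∨ e i *ᵥ x = -(e i *ᵥ y)) :
    (∑ i, z i • e i) *ᵥ x = α • x + β • y ↔
      ∀ i, e i *ᵥ x ≠ 0 →
        (e i *ᵥ x = e i *ᵥ y → z i = α + β) ∧ (e i *ᵥ x = -(e i *ᵥ y) → z i = α - β) := by
  rw [he.eq_iff_forall_mulVec_eq]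
  simp only [mulVec_mulVec, he.mul_sum_smul, smul_mulVec, mulVec_add, mulVec_smul]
  exact forall_congr' fun i => smul_eq_smul_add_smul_iff (hxy i) (z i) α β

theorem map_ofReal {e : ι → Matrix V V ℝ} (he : CompleteOrthogonalIdempotents e) :
    CompleteOrthogonalIdempotents fun i => (e i).map (fun x => (x : ℂ)) :=
  he.map (ofRealHom.mapMatrix : Matrix V V ℝ →+* Matrix V V ℂ)

theorem sum_smul_map_ofReal_mulVec_eq_iff {e : ι → Matrix V V ℝ} (he : CompleteOrthogonalIdempotents e) (z : ι → ℂ) (α β : ℂ)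
    {x y : V → ℝ} (hxy : ∀ i, e i *ᵥ x = e i *ᵥ y ∨ e i *ᵥ x = -(e i *ᵥ y)) :
    (∑ i, z i • (e i).map (fun x => (x : ℂ))) *ᵥ ofRealHom.compLeft V x =
        α • ofRealHom.compLeft V x + β • ofRealHom.compLeft V y ↔
      ∀ i, e i *ᵥ x ≠ 0 →
        (e i *ᵥ x = e i *ᵥ y → z i = α + β) ∧ (e i *ᵥ x = -(e i *ᵥ y) → z i = α - β) := by
  have hinj : Function.Injective (ofRealHom.compLeft V) := ofReal_injective.comp_left
  rw [he.map_ofReal.sum_smul_mulVec_eq_iff z α β fun i => by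
    simpa only [map_ofReal_mulVec, ← map_neg, hinj.eq_iff] using hxy i]
  simp only [map_ofReal_mulVec, ← map_neg, hinj.eq_iff, ne_eq, map_eq_zero_iff _ hinj]

end

end CompleteOrthogonalIdempotents

theorem qwalk_eq_sum_exp_smul {ι V : Type*} [Fintype ι] [Fintype V] [DecidableEq V]
    {A : Matrix V V ℝ} {θ : ι → ℝ} {e : ι → Matrix V V ℝ}
    (he : CompleteOrthogonalIdempotents e) (hA : A = ∑ i, θ i • e i) (t : ℝ) :
    qwalk A t = ∑ i, Complex.exp (-(I * t * θ i)) • (e i).map (fun x => (x : ℂ)) := by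
  rw [qwalk, ← he.map_ofReal.exp_sum_smul_s3, hA]
  congr 1
  ext j k
  simp [Matrix.sum_apply, Finset.mul_sum, mul_assoc]

theorem exp_I_mul_eq_exp_I_mul_iff {x y : ℝ} :
    Complex.exp (I * x) = Complex.exp (I * y) ↔ ∃ k : ℤ, x = y + 2 * π * k := by
  rw [mul_comm I, mul_comm I, ← Circle.coe_exp, ← Circle.coe_exp, Circle.coe_inj,
    Circle.exp_eq_exp]
  simp only [mul_comm (_ : ℝ) (2 * π)]

theorem exp_I_mul_mul_cos_add_I_mul_exp_I_mul_mul_sin (ζ γ : ℝ) :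
    Complex.exp (I * ζ) * Real.cos γ + I * Complex.exp (I * ζ) * Real.sin γ =
      Complex.exp (I * ↑(ζ + γ)) := by
  rw [show I * ↑(ζ + γ) = I * ζ + γ * I by push_cast; ring, Complex.exp_add, exp_mul_I,
    ofReal_cos, ofReal_sin]
  ring

theorem exp_I_mul_mul_cos_sub_I_mul_exp_I_mul_mul_sin (ζ γ : ℝ) :
    Complex.exp (I * ζ) * Real.cos γ - I * Complex.exp (I * ζ) * Real.sin γ =
      Complex.exp (I * ↑(ζ - γ)) := by
  rw [show I * ↑(ζ - γ) = I * ζ + ↑(-γ) * I by push_cast; ring, Complex.exp_add, exp_mul_I,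
    ofReal_cos, ofReal_sin, ofReal_neg, Complex.cos_neg, Complex.sin_neg]
  ring

section Phase

variable {τ γ ζ θ₀ : ℝ}

theorem exists_phase_add_iff (hζ : ∃ k : ℤ, ζ = -τ * θ₀ - γ + 2 * π * k) (θ : ℝ) :
    (∃ k : ℤ, -(τ * θ) = ζ + γ + 2 * π * k) ↔ ∃ k : ℤ, τ * (θ₀ - θ) = 2 * π * k := by
  obtain ⟨k₀, hk₀⟩ := hζ
  constructor
  · rintro ⟨k, hk⟩
    exact ⟨k + k₀, by push_cast; linear_combination hk + hk₀⟩
  · rintro ⟨k, hk⟩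
    exact ⟨k - k₀, by push_cast; linear_combination hk - hk₀⟩

theorem exists_phase_sub_iff (hζ : ∃ k : ℤ, ζ = -τ * θ₀ - γ + 2 * π * k) (θ : ℝ) :
    (∃ k : ℤ, -(τ * θ) = ζ - γ + 2 * π * k) ↔
      ∃ k : ℤ, τ * (θ₀ - θ) = -2 * γ + 2 * π * k := by
  obtain ⟨k₀, hk₀⟩ := hζ
  constructor
  · rintro ⟨k, hk⟩
    exact ⟨k + k₀, by push_cast; linear_combination hk + hk₀⟩
  · rintro ⟨k, hk⟩
    exact ⟨k - k₀, by push_cast; linear_combination hk - hk₀⟩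

end Phase

theorem stmt3_general {n m : ℕ} (A : Matrix (Fin n) (Fin n) ℝ)
    (θ : Fin m → ℝ) (E : Fin m → Matrix (Fin n) (Fin n) ℝ) (r0 : Fin m)
    (hdecomp : A = ∑ r, θ r • E r)
    (hsum : ∑ r, E r = 1)
    (horth : ∀ r s, E r * E s = if r = s then E r else 0)
    (a b : Fin n)
    (hsc : ∀ r, E r *ᵥ eR a = E r *ᵥ eR b ∨ E r *ᵥ eR a = -(E r *ᵥ eR b))
    (hPerron : E r0 *ᵥ eR a = E r0 *ᵥ eR b)
    (hsupp0 : E r0 *ᵥ eR a ≠ 0)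
    (τ γ ζ : ℝ) :
    ((qwalk A τ) *ᵥ eC a =
        (Complex.exp (Complex.I * ζ) * Real.cos γ) • eC a +
        (Complex.I * Complex.exp (Complex.I * ζ) * Real.sin γ) • eC b) ↔
    ((∃ k : ℤ, ζ = -τ * θ r0 - γ + 2 * Real.pi * k) ∧
      ∀ r, E r *ᵥ eR a ≠ 0 →
        ((E r *ᵥ eR a = E r *ᵥ eR b → ∃ k : ℤ, τ * (θ r0 - θ r) = 2 * Real.pi * k) ∧
         (E r *ᵥ eR a = -(E r *ᵥ eR b) →
            ∃ k : ℤ, τ * (θ r0 - θ r) = -2 * γ + 2 * Real.pi * k))) := by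
  have hE : CompleteOrthogonalIdempotents E := ⟨OrthogonalIdempotents.iff_mul_eq.2 horth, hsum⟩
  have hphase : ∀ r, -(I * τ * θ r) = I * ↑(-(τ * θ r)) := fun r => by push_cast; ring
  rw [qwalk_eq_sum_exp_smul hE hdecomp, eC_eq_ofReal_eR, eC_eq_ofReal_eR,
    hE.sum_smul_map_ofReal_mulVec_eq_iff _ _ _ hsc]
  simp only [exp_I_mul_mul_cos_add_I_mul_exp_I_mul_mul_sin,
    exp_I_mul_mul_cos_sub_I_mul_exp_I_mul_mul_sin, hphase, exp_I_mul_eq_exp_I_mul_iff]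
  constructor
  · intro h
    obtain ⟨k, hk⟩ := (h r0 hsupp0).1 hPerron
    have hζ : ∃ k : ℤ, ζ = -τ * θ r0 - γ + 2 * π * k :=
      ⟨-k, by push_cast; linear_combination -hk⟩
    refine ⟨hζ, fun r hr => ?_⟩
    rw [← exists_phase_add_iff hζ, ← exists_phase_sub_iff hζ]
    exact h r hr
  · rintro ⟨hζ, h⟩ r hr
    rw [exists_phase_add_iff hζ, exists_phase_sub_iff hζ]
    exact h r hr

/-- Characterization of fractional revival between strongly cospectral vertices:
(e^{iζ}cos γ, i e^{iζ}sin γ)-revival occurs at time τ iff ζ = -τθ₀ - γ (mod 2π) and,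
for every eigenvalue θ_r in the support of a, τ(θ₀ - θ_r) ≡ 0 (mod 2π) when
E_r e_a = E_r e_b, and ≡ -2γ (mod 2π) when E_r e_a = -E_r e_b. -/
theorem stmt3 {n m : ℕ} (A : Matrix (Fin n) (Fin n) ℝ) (hA : A.IsSymm)
    (θ : Fin m → ℝ) (E : Fin m → Matrix (Fin n) (Fin n) ℝ) (r0 : Fin m)
    (hdecomp : A = ∑ r, θ r • E r)
    (hsum : ∑ r, E r = 1)
    (hsymm : ∀ r, (E r).IsSymm)
    (horth : ∀ r s, E r * E s = if r = s then E r else 0)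
    (hmax : ∀ r, θ r ≤ θ r0)
    (a b : Fin n) (hab : a ≠ b)
    (hsc : ∀ r, E r *ᵥ eR a = E r *ᵥ eR b ∨ E r *ᵥ eR a = -(E r *ᵥ eR b))
    (hPerron : E r0 *ᵥ eR a = E r0 *ᵥ eR b)
    (hsupp0 : E r0 *ᵥ eR a ≠ 0)
    (τ γ ζ : ℝ) :
    ((qwalk A τ) *ᵥ eC a =
        (Complex.exp (Complex.I * ζ) * Real.cos γ) • eC a +
        (Complex.I * Complex.exp (Complex.I * ζ) * Real.sin γ) • eC b) ↔
    ((∃ k : ℤ, ζ = -τ * θ r0 - γ + 2 * Real.pi * k) ∧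
      ∀ r, E r *ᵥ eR a ≠ 0 →
        ((E r *ᵥ eR a = E r *ᵥ eR b → ∃ k : ℤ, τ * (θ r0 - θ r) = 2 * Real.pi * k) ∧
         (E r *ᵥ eR a = -(E r *ᵥ eR b) →
            ∃ k : ℤ, τ * (θ r0 - θ r) = -2 * γ + 2 * Real.pi * k))) :=
  stmt3_general A θ E r0 hdecomp hsum horth a b hsc hPerron hsupp0 τ γ ζ
end

section
/- Let Φ be a finite set of real algebraic integers closed under algebraic conjugation such that for all θ_i,θ_j,θ_r,θ_s ∈ Φ with θ_r ≠ θ_s, (θ_i-θ_j)/(θ_r-θ_s) is rational. Then every element of Φ is an integer or a quadratic algebraic integer; moreover there exist integers a, Δ (square-free) and integers b_r such that every θ ∈ Φ has the form θ = (a + b_r√Δ)/2 for some r. -/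
/-!
Put `L = ℚ(Φ) ⊆ ℝ` and `δ = θr - θs` for two distinct `θr, θs ∈ Φ`. Every embedding
`σ : L → ℂ` maps `Φ` into `Φ`, so the ratio hypothesis gives `σ δ = q_σ δ` and
`σ θr = θr + q'_σ δ` with rational `q_σ, q'_σ`. Summing over all `σ` (the trace) yields
`Tr(δ²) = (∑ q_σ²) δ²` and `Tr θr = N θr + (∑ q'_σ) δ` (`N` embeddings), so `δ² ∈ ℚ` and
`θr ∈ ℚ + ℚ δ`.
Hence every `θ ∈ Φ` is `c + f √A` with one rational `c`, rational `f` and square-free `A`.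
If `θ` is irrational, its minimal polynomial is `X² - 2c X + (c² - f² A)`, which has
integer coefficients since `θ` is an algebraic integer; so `2c ∈ ℤ`, and `(2f)² A ∈ ℤ`
forces `2f ∈ ℤ`.
-/

open Polynomial IntermediateField

section Embeddings

variable {K L E : Type*} [Field K] [Field L] [Field E] [Algebra K L] [Algebra K E]
  [IsAlgClosed E] [FiniteDimensional K L] [Algebra.IsSeparable K L]

theorem exists_eq_algebraMap_add_smul_of_forall_embedding [CharZero K] (ι : L →ₐ[K] E)
    {x y : L} (h : ∀ σ : L →ₐ[K] E, ∃ q : K, σ x = ι (x + q • y)) :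
    ∃ c g : K, x = algebraMap K L c + g • y := by
  choose q hq using h
  set N : K := (Fintype.card (L →ₐ[K] E) : K)
  have hN : N ≠ 0 := Nat.cast_ne_zero.mpr (@Fintype.card_ne_zero _ _ ⟨ι⟩)
  have htrace : algebraMap K L (Algebra.trace K L x) = N • x + (∑ σ, q σ) • y := by
    refine ι.injective (?_ : ι _ = ι _)
    rw [AlgHom.commutes, trace_eq_sum_embeddings, Finset.sum_congr rfl fun σ _ => hq σ,
      ← map_sum, Finset.sum_add_distrib, Finset.sum_const, Finset.card_univ, ← Finset.sum_smul]
    simp [N, Nat.cast_smul_eq_nsmul]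
  refine ⟨Algebra.trace K L x / N, -(∑ σ, q σ) / N, ?_⟩
  have hN' : algebraMap K L N ≠ 0 := (_root_.map_ne_zero _).mpr hN
  simp only [Algebra.smul_def, map_div₀, map_neg] at htrace ⊢
  rw [htrace]
  field_simp
  ring

theorem exists_sq_eq_algebraMap_of_forall_embedding [LinearOrder K] [IsStrictOrderedRing K]
    (ι : L →ₐ[K] E) {y : L} (h : ∀ σ : L →ₐ[K] E, ∃ q : K, σ y = ι (q • y)) :
    ∃ r : K, y ^ 2 = algebraMap K L r := by
  rcases eq_or_ne y 0 with rfl | hy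
  · exact ⟨0, by simp⟩
  choose q hq using h
  have hqι : q ι = 1 :=
    (smul_left_injective K hy ((one_smul K y).trans (ι.injective (hq ι)))).symm
  set S : K := ∑ σ, q σ ^ 2
  have hS : 0 < S := by
    calc 0 < q ι ^ 2 := by simp [hqι]
      _ ≤ S := Finset.single_le_sum (fun σ _ => sq_nonneg (q σ)) (Finset.mem_univ ι)
  have htrace : algebraMap K L (Algebra.trace K L (y ^ 2)) = S • y ^ 2 := by
    refine ι.injective (?_ : ι _ = ι _)
    rw [AlgHom.commutes, trace_eq_sum_embeddings]
    have hσ (σ : L →ₐ[K] E) : σ (y ^ 2) = ι (q σ ^ 2 • y ^ 2) := by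
      rw [map_pow, hq, ← map_pow, _root_.smul_pow]
    rw [Finset.sum_congr rfl fun σ _ => hσ σ, ← map_sum, ← Finset.sum_smul]
  refine ⟨Algebra.trace K L (y ^ 2) / S, ?_⟩
  rw [div_eq_inv_mul, map_mul, htrace, Algebra.smul_def, ← mul_assoc, ← map_mul,
    inv_mul_cancel₀ hS.ne', map_one, one_mul]

end Embeddings

theorem exists_mem_coe_eq_embedding {S : Set ℝ}
    (hconj : ∀ θ ∈ S, ∀ z : ℂ, aeval z (minpoly ℚ θ) = 0 → ∃ θ' ∈ S, (θ' : ℂ) = z)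
    (σ : adjoin ℚ S →ₐ[ℚ] ℂ) {θ : ℝ} (hθ : θ ∈ S) :
    ∃ θ' ∈ S, (θ' : ℂ) = σ ⟨θ, subset_adjoin ℚ S hθ⟩ := by
  refine hconj θ hθ _ ?_
  let x : adjoin ℚ S := ⟨θ, subset_adjoin ℚ S hθ⟩
  have hmin : minpoly ℚ θ = minpoly ℚ x :=
    minpoly.algebraMap_eq (algebraMap (adjoin ℚ S) ℝ).injective x
  rw [hmin, aeval_algHom_apply, minpoly.aeval, map_zero]

theorem exists_mem_forall_sub_eq_rat_mul {S : Set ℝ} (hS : S.Nonempty)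
    (hratio : ∀ θi ∈ S, ∀ θj ∈ S, ∀ θr ∈ S, ∀ θs ∈ S, θr ≠ θs →
      ∃ q : ℚ, θi - θj = q * (θr - θs)) :
    ∃ θr ∈ S, ∃ θs ∈ S, ∀ θ ∈ S, ∀ θ' ∈ S, ∃ q : ℚ, θ' - θ = q * (θr - θs) := by
  by_cases h : ∃ θr ∈ S, ∃ θs ∈ S, θr ≠ θs
  · obtain ⟨θr, hr, θs, hs, hne⟩ := h
    exact ⟨θr, hr, θs, hs, fun θ hθ θ' hθ' => hratio θ' hθ' θ hθ θr hr θs hs hne⟩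
  · push Not at h
    obtain ⟨θ₀, h₀⟩ := hS
    exact ⟨θ₀, h₀, θ₀, h₀, fun θ hθ θ' hθ' => ⟨0, by simp [h θ' hθ' θ hθ]⟩⟩

theorem exists_sq_eq_ratCast_and_eq_add_mul {S : Set ℝ} (hS : S.Finite)
    (halg : ∀ θ ∈ S, IsIntegral ℚ θ)
    (hconj : ∀ θ ∈ S, ∀ z : ℂ, aeval z (minpoly ℚ θ) = 0 → ∃ θ' ∈ S, (θ' : ℂ) = z)
    {θr θs : ℝ} (hr : θr ∈ S) (hs : θs ∈ S)
    (hδ : ∀ θ ∈ S, ∀ θ' ∈ S, ∃ q : ℚ, θ' - θ = q * (θr - θs)) :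
    (∃ r : ℚ, (θr - θs) ^ 2 = r) ∧ ∃ c : ℚ, ∀ θ ∈ S, ∃ f : ℚ, θ = c + f * (θr - θs) := by
  let L := adjoin ℚ S
  have : FiniteDimensional ℚ L := by
    have := hS.to_subtype
    exact finiteDimensional_adjoin halg
  let ι : L →ₐ[ℚ] ℂ := (Complex.ofRealAm.restrictScalars ℚ).comp L.val
  have hι (z : L) : ι z = ((z : ℝ) : ℂ) := rfl
  let x : L := ⟨θr, subset_adjoin ℚ S hr⟩
  let y : L := x - ⟨θs, subset_adjoin ℚ S hs⟩
  have hy (σ : L →ₐ[ℚ] ℂ) : ∃ q : ℚ, σ y = ι (q • y) := by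
    obtain ⟨θr', hr', hσr⟩ := exists_mem_coe_eq_embedding hconj σ hr
    obtain ⟨θs', hs', hσs⟩ := exists_mem_coe_eq_embedding hconj σ hs
    obtain ⟨q, hq⟩ := hδ θs' hs' θr' hr'
    refine ⟨q, ?_⟩
    simpa [hι, y, x, ← hσr, ← hσs, Rat.smul_def] using congrArg ((↑) : ℝ → ℂ) hq
  have hx (σ : L →ₐ[ℚ] ℂ) : ∃ q : ℚ, σ x = ι (x + q • y) := by
    obtain ⟨θr', hr', hσr⟩ := exists_mem_coe_eq_embedding hconj σ hr
    obtain ⟨q, hq⟩ := hδ θr hr θr' hr'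
    refine ⟨q, ?_⟩
    have hθr' : θr' = θr + q * (θr - θs) := by linear_combination hq
    simpa [hι, y, x, ← hσr, Rat.smul_def] using congrArg ((↑) : ℝ → ℂ) hθr'
  obtain ⟨r, hsq⟩ := exists_sq_eq_algebraMap_of_forall_embedding ι hy
  obtain ⟨c, g, hcg⟩ := exists_eq_algebraMap_add_smul_of_forall_embedding ι hx
  have hr' : (θr - θs) ^ 2 = r := by simpa [x, y] using congrArg L.val hsq
  have hcg' : θr = c + g * (θr - θs) := by simpa [x, y, Rat.smul_def] using congrArg L.val hcg
  refine ⟨⟨r, hr'⟩, c, fun θ hθ => ?_⟩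
  obtain ⟨q, hq⟩ := hδ θr hr θ hθ
  exact ⟨g + q, by push_cast; linear_combination hq + hcg'⟩

theorem exists_rat_mul_sqrt_of_sq_eq_ratCast {x : ℝ} {r : ℚ} (h : x ^ 2 = r) :
    ∃ (t : ℚ) (A : ℕ), Squarefree A ∧ x = t * √A := by
  obtain ⟨A, B, hBA, hA⟩ := Nat.sq_mul_squarefree (r.num.natAbs * r.den)
  have hr : (0 : ℚ) ≤ r := by exact_mod_cast h ▸ sq_nonneg x
  obtain ⟨t, ht⟩ : ∃ t : ℚ, r = t ^ 2 * A := by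
    have hnum : (r.num.natAbs : ℚ) = r * r.den := by
      rw [Nat.cast_natAbs, Int.cast_abs, abs_of_nonneg (by exact_mod_cast Rat.num_nonneg.mpr hr)]
      exact (Rat.mul_den_eq_num r).symm
    have hBA' : (B : ℚ) ^ 2 * A = r * r.den ^ 2 := by
      calc (B : ℚ) ^ 2 * A = (r.num.natAbs * r.den : ℕ) := by rw [← hBA]; push_cast; ring
        _ = r * r.den ^ 2 := by push_cast; rw [hnum]; ring
    refine ⟨B / r.den, ?_⟩
    rw [div_pow, div_mul_eq_mul_div, hBA']
    field_simp
  have hsq : x ^ 2 = (t * √A) ^ 2 := by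
    rw [mul_pow, Real.sq_sqrt (Nat.cast_nonneg A), h, ht]
    push_cast
    ring
  rcases sq_eq_sq_iff_eq_or_eq_neg.mp hsq with hx | hx
  · exact ⟨t, A, hA, hx⟩
  · exact ⟨-t, A, hA, by rw [hx]; push_cast; ring⟩

-- `(X - (c + f y)) (X - (c - f y))` for `y ^ 2 = r`
noncomputable def conjQuadratic (c f r : ℚ) : ℚ[X] :=
  X ^ 2 - C (2 * c) * X + C (c ^ 2 - f ^ 2 * r)

theorem conjQuadratic_monic (c f r : ℚ) : (conjQuadratic c f r).Monic := by
  rw [conjQuadratic]; monicity!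

theorem natDegree_conjQuadratic (c f r : ℚ) : (conjQuadratic c f r).natDegree = 2 := by
  rw [conjQuadratic]; compute_degree!

theorem coeff_conjQuadratic_one (c f r : ℚ) : (conjQuadratic c f r).coeff 1 = -(2 * c) := by
  simp only [conjQuadratic, coeff_add, coeff_sub, coeff_C_mul, coeff_X_pow, coeff_C, coeff_X]
  norm_num

theorem coeff_conjQuadratic_zero (c f r : ℚ) :
    (conjQuadratic c f r).coeff 0 = c ^ 2 - f ^ 2 * r := by
  simp only [conjQuadratic, coeff_add, coeff_sub, coeff_C_mul, coeff_X_pow, coeff_C, coeff_X]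
  norm_num

theorem aeval_conjQuadratic {y : ℝ} {r : ℚ} (hy : y ^ 2 = r) (c f : ℚ) :
    aeval (c + f * y) (conjQuadratic c f r) = 0 := by
  simp only [conjQuadratic, map_add, map_sub, map_pow, map_mul, aeval_X, aeval_C, eq_ratCast]
  push_cast
  linear_combination (f : ℝ) ^ 2 * hy

theorem natDegree_minpoly_add_mul_le_two {y : ℝ} {r : ℚ} (hy : y ^ 2 = r) (c f : ℚ) :
    (minpoly ℚ (c + f * y)).natDegree ≤ 2 :=
  natDegree_conjQuadratic c f r ▸
    natDegree_le_of_dvd (minpoly.dvd _ _ (aeval_conjQuadratic hy c f))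
      (conjQuadratic_monic c f r).ne_zero

theorem minpoly_add_mul_eq_conjQuadratic {y : ℝ} {r : ℚ} (hy : y ^ 2 = r) {c f : ℚ}
    (hirr : Irrational (c + f * y)) : minpoly ℚ (c + f * y) = conjQuadratic c f r := by
  have hint : IsIntegral ℚ (c + f * y) :=
    ⟨_, conjQuadratic_monic c f r, by rw [← aeval_def]; exact aeval_conjQuadratic hy c f⟩
  refine (eq_of_monic_of_dvd_of_natDegree_le (minpoly.monic hint) (conjQuadratic_monic c f r)
    (minpoly.dvd _ _ (aeval_conjQuadratic hy c f)) ?_).symm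
  rw [natDegree_conjQuadratic, minpoly.two_le_natDegree_iff hint]
  rintro ⟨q, hq⟩
  exact hirr ⟨q, hq⟩

theorem Rat.den_eq_one_of_sq_mul_squarefree {Δ m : ℤ} (hΔ : Squarefree Δ) {q : ℚ}
    (h : q ^ 2 * Δ = m) : q.den = 1 := by
  have hnum : q.num ^ 2 * Δ = m * (q.den : ℤ) ^ 2 := by
    have : (q.num : ℚ) = q * q.den := (Rat.mul_den_eq_num q).symm
    exact_mod_cast (by rw [this, ← h]; ring : (q.num : ℚ) ^ 2 * Δ = m * (q.den : ℚ) ^ 2)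
  have hcop : IsCoprime ((q.den : ℤ) ^ 2) (q.num ^ 2) :=
    (Int.isCoprime_iff_gcd_eq_one.mpr (by simpa [Int.gcd] using q.reduced.symm)).pow
  have hdvd : (q.den : ℤ) * q.den ∣ Δ := by
    rw [← sq]
    exact hcop.dvd_of_dvd_mul_left ⟨m, by rw [hnum]; ring⟩
  simpa using Int.isUnit_iff.mp (hΔ _ hdvd)

theorem exists_int_eq_of_isIntegral_ratCast {q : ℚ} (h : IsIntegral ℤ (q : ℝ)) :
    ∃ m : ℤ, (m : ℚ) = q :=
  IsIntegrallyClosed.isIntegral_iff.mp <|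
    IsIntegral.tower_bot_of_field (B := ℝ) (by simpa using h)

theorem irrational_sqrt_of_squarefree {A : ℕ} (hA : Squarefree A) (hA1 : A ≠ 1) :
    Irrational √A := by
  refine irrational_sqrt_natCast_iff.mpr fun ⟨k, hk⟩ => hA1 ?_
  obtain rfl : k = 1 := Nat.isUnit_iff.mp (hA k (hk ▸ dvd_refl _))
  simpa using hk

theorem exists_int_eq_two_mul_of_isIntegral {A : ℕ} (hA : Squarefree A) (hA1 : A ≠ 1)
    {c f : ℚ} (h : IsIntegral ℤ (c + f * √A)) : (∃ a : ℤ, a = 2 * c) ∧ ∃ b : ℤ, b = 2 * f := by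
  rcases eq_or_ne f 0 with rfl | hf
  · obtain ⟨m, hm⟩ := exists_int_eq_of_isIntegral_ratCast (q := c) (by simpa using h)
    exact ⟨⟨2 * m, by push_cast [hm]; ring⟩, 0, by simp⟩
  have hmin := minpoly_add_mul_eq_conjQuadratic (r := A) (by simp) <|
    ((irrational_sqrt_of_squarefree hA hA1).ratCast_mul hf).ratCast_add c
  have hcoeff (i : ℕ) : ∃ m : ℤ, (m : ℚ) = (conjQuadratic c f A).coeff i := by
    rw [← hmin, minpoly.isIntegrallyClosed_eq_field_fractions' ℚ h, coeff_map]
    exact ⟨_, rfl⟩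
  obtain ⟨m₁, hm₁⟩ := hcoeff 1
  obtain ⟨m₀, hm₀⟩ := hcoeff 0
  rw [coeff_conjQuadratic_one] at hm₁
  rw [coeff_conjQuadratic_zero] at hm₀
  refine ⟨⟨-m₁, by push_cast; linarith⟩, (2 * f).num, Rat.coe_int_num_of_den_eq_one
    (Rat.den_eq_one_of_sq_mul_squarefree (Int.squarefree_natCast.mpr hA)
      (m := m₁ ^ 2 - 4 * m₀) ?_)⟩
  -- the discriminant `(2 f) ^ 2 A` of `conjQuadratic c f A` is the integer `m₁ ^ 2 - 4 m₀`
  push_cast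
  linear_combination (-(m₁ - 2 * c)) * hm₁ + 4 * hm₀

theorem exists_int_forall_eq_half_add_mul_sqrt {S : Set ℝ} {A : ℕ} (hA : Squarefree A) (c : ℚ)
    (hint : ∀ θ ∈ S, IsIntegral ℤ θ) (hrep : ∀ θ ∈ S, ∃ f : ℚ, θ = c + f * √A) :
    ∃ a Δ : ℤ, Squarefree Δ ∧ ∀ θ ∈ S, ∃ b : ℤ, θ = (a + b * √Δ) / 2 := by
  by_cases hA1 : A = 1
  · subst hA1
    refine ⟨0, 1, squarefree_one, fun θ hθ => ?_⟩
    obtain ⟨f, rfl⟩ := hrep θ hθ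
    obtain ⟨m, hm⟩ :=
      exists_int_eq_of_isIntegral_ratCast (q := c + f) (by simpa using hint _ hθ)
    have hm' : (m : ℝ) = c + f := by exact_mod_cast hm
    exact ⟨2 * m, by rw [Int.cast_mul, hm']; simp⟩
  rcases S.eq_empty_or_nonempty with rfl | ⟨θ₀, h₀⟩
  · exact ⟨0, 1, squarefree_one, by simp⟩
  obtain ⟨f₀, rfl⟩ := hrep θ₀ h₀
  obtain ⟨⟨a, ha⟩, -⟩ := exists_int_eq_two_mul_of_isIntegral hA hA1 (hint _ h₀)
  refine ⟨a, A, Int.squarefree_natCast.mpr hA, fun θ hθ => ?_⟩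
  obtain ⟨f, rfl⟩ := hrep θ hθ
  obtain ⟨-, b, hb⟩ := exists_int_eq_two_mul_of_isIntegral hA hA1 (hint _ hθ)
  have ha' : (a : ℝ) = 2 * c := by exact_mod_cast ha
  have hb' : (b : ℝ) = 2 * f := by exact_mod_cast hb
  exact ⟨b, by rw [ha', hb', Int.cast_natCast]; ring⟩

/-- A set of real algebraic integers, closed under algebraic (Galois) conjugation,
whose pairwise eigenvalue-difference ratios are all rational, consists of integers or
quadratic algebraic integers, all of the form (a + b_r √Δ)/2 for fixed a and
square-free Δ. -/
theorem stmt5 (Φ : Finset ℝ)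
    (hint : ∀ θ ∈ Φ, IsIntegral ℤ θ)
    (hconj : ∀ θ ∈ Φ, ∀ z : ℂ, Polynomial.aeval z (minpoly ℚ θ) = 0 →
      ∃ θ' ∈ Φ, (θ' : ℂ) = z)
    (hratio : ∀ θi ∈ Φ, ∀ θj ∈ Φ, ∀ θr ∈ Φ, ∀ θs ∈ Φ, θr ≠ θs →
      ∃ q : ℚ, θi - θj = q * (θr - θs)) :
    (∀ θ ∈ Φ, (minpoly ℚ θ).natDegree ≤ 2) ∧
    ∃ (a Δ : ℤ), Squarefree Δ ∧
      ∀ θ ∈ Φ, ∃ b : ℤ, θ = (a + b * Real.sqrt Δ) / 2 := by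
  obtain ⟨δ, ⟨r, hδ⟩, c, hc⟩ : ∃ δ : ℝ, (∃ r : ℚ, δ ^ 2 = r) ∧
      ∃ c : ℚ, ∀ θ ∈ Φ, ∃ f : ℚ, θ = c + f * δ := by
    rcases Φ.eq_empty_or_nonempty with rfl | hΦ
    · exact ⟨0, ⟨0, by simp⟩, 0, by simp⟩
    obtain ⟨θr, hr, θs, hs, hrs⟩ :=
      exists_mem_forall_sub_eq_rat_mul (Finset.coe_nonempty.mpr hΦ) hratio
    exact ⟨θr - θs, exists_sq_eq_ratCast_and_eq_add_mul Φ.finite_toSet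
      (fun θ hθ => (hint θ hθ).tower_top) hconj hr hs hrs⟩
  refine ⟨fun θ hθ => ?_, ?_⟩
  · obtain ⟨f, rfl⟩ := hc θ hθ
    exact natDegree_minpoly_add_mul_le_two hδ c f
  obtain ⟨t, A, hA, rfl⟩ := exists_rat_mul_sqrt_of_sq_eq_ratCast hδ
  refine exists_int_forall_eq_half_add_mul_sqrt hA c hint fun θ hθ => ?_
  obtain ⟨f, hf⟩ := hc θ hθ
  exact ⟨f * t, by rw [hf]; push_cast; ring⟩
end

section
/- Suppose (e^{iζ}cos γ, i e^{iζ}sin γ)-revival occurs between strongly cospectral vertices a and b at time τ, with γ = (p/q)π for coprime integers p, q. Then the graph is periodic at a (and at b) at time qτ, i.e. U(qτ)e_a is a unimodular multiple of e_a; and if q is even then U((q/2)τ)e_a is a unimodular multiple of e_b (perfect state transfer at time qτ/2). -/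
open Matrix Complex BigOperators

/-!
Write `U(t)` for the walk and `α = e^{iζ} cos γ`, `β = i e^{iζ} sin γ`. Strong cospectrality
gives an involution `T = ∑ ±E_r` commuting with `A` and swapping `e_a` and `e_b`; conjugating
`U(τ) e_a = α e_a + β e_b` by `T` gives `U(τ) e_b = β e_a + α e_b`. Hence `e_a ± e_b` are
eigenvectors of `U(τ)` with eigenvalues `e^{i(ζ ± γ)}`, and `U(kτ)` is a revival with parameters
`(kζ, kγ)` for every integer `k`. For `k = q` we get `kγ = pπ`, so `sin kγ = 0`: periodicity.
For `q = 2k`, coprimality makes `p` odd, so `cos kγ = cos (pπ/2) = 0`: perfect state transfer.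
-/

theorem Matrix.exists_swap_of_mulVec_eq_or_eq_neg {R ι n : Type*} [CommRing R] [Fintype ι]
    [DecidableEq ι] [Fintype n] [DecidableEq n] {E : ι → Matrix n n R}
    (hsum : ∑ r, E r = 1) (horth : ∀ r s, E r * E s = if r = s then E r else 0)
    {x y : n → R} (hxy : ∀ r, E r *ᵥ x = E r *ᵥ y ∨ E r *ᵥ x = -(E r *ᵥ y)) :
    ∃ T : Matrix n n R, (∀ r, Commute (E r) T) ∧ T *ᵥ x = y ∧ T *ᵥ y = x := by
  have hsign : ∀ r, ∃ ε : R, ε * ε = 1 ∧ E r *ᵥ x = ε • E r *ᵥ y := fun r =>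
    (hxy r).elim (fun h => ⟨1, by simp, by simp [h]⟩) (fun h => ⟨-1, by simp, by simp [h]⟩)
  choose ε hε hεx using hsign
  have hεy : ∀ r, E r *ᵥ y = ε r • E r *ᵥ x := fun r => by
    rw [hεx, smul_smul, hε, one_smul]
  have hcomm : ∀ r s, Commute (E r) (E s) := fun r s => by
    by_cases h : r = s
    · exact h ▸ Commute.refl _
    · rw [Commute, SemiconjBy, horth, horth, if_neg h, if_neg (Ne.symm h)]
  refine ⟨∑ r, ε r • E r,
    fun r => Commute.sum_right _ _ _ fun s _ => (hcomm r s).smul_right _, ?_, ?_⟩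
  · simp_rw [sum_mulVec, smul_mulVec, ← hεy, ← sum_mulVec, hsum, one_mulVec]
  · simp_rw [sum_mulVec, smul_mulVec, ← hεx, ← sum_mulVec, hsum, one_mulVec]

theorem exp_I_mul_add (ζ γ : ℝ) :
    exp (I * ζ) * Real.cos γ + I * exp (I * ζ) * Real.sin γ = exp (I * ↑(ζ + γ)) := by
  rw [ofReal_add, mul_add, exp_add, mul_comm I ↑γ, exp_mul_I, ← ofReal_cos, ← ofReal_sin]
  ring

theorem exp_I_mul_sub (ζ γ : ℝ) :
    exp (I * ζ) * Real.cos γ - I * exp (I * ζ) * Real.sin γ = exp (I * ↑(ζ - γ)) := by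
  rw [sub_eq_add_neg ζ, ← exp_I_mul_add, Real.cos_neg, Real.sin_neg, ofReal_neg]
  ring

section Walk

variable {V : Type*} [Fintype V] [DecidableEq V]

theorem qwalk_zero (A : Matrix V V ℝ) : qwalk A 0 = 1 := by
  simp [qwalk]

theorem qwalk_add (A : Matrix V V ℝ) (s t : ℝ) : qwalk A (s + t) = qwalk A s * qwalk A t := by
  rw [qwalk, qwalk, qwalk,
    ← Matrix.exp_add_of_commute _ _ (((Commute.refl _).smul_left _).smul_right _), ← add_smul]
  congr 2
  push_cast
  ring

theorem Commute.qwalk {A T : Matrix V V ℝ} (h : Commute A T) (t : ℝ) :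
    Commute (qwalk A t) (T.map ((↑) : ℝ → ℂ)) :=
  ((h.map Complex.ofRealHom.mapMatrix).smul_left _).exp_left

theorem map_mulVec_eC {T : Matrix V V ℝ} {a b : V} (h : T *ᵥ eR a = eR b) :
    T.map ((↑) : ℝ → ℂ) *ᵥ eC a = eC b := by
  have hcomp : ∀ c : V, eC c = Complex.ofRealHom ∘ eR c := fun c => by
    ext i
    by_cases hi : i = c <;> simp [eC, eR, hi]
  rw [hcomp, hcomp, ← h]
  ext i
  exact (RingHom.map_mulVec Complex.ofRealHom T (eR a) i).symm

theorem qwalk_int_mul_mulVec (A : Matrix V V ℝ) {τ : ℝ} {v : V → ℂ} {c : ℂ} (hc : c ≠ 0)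
    (h : qwalk A τ *ᵥ v = c • v) (k : ℤ) : qwalk A (k * τ) *ᵥ v = c ^ k • v := by
  have step : ∀ j : ℤ, qwalk A ((j + 1 : ℤ) * τ) *ᵥ v = c • qwalk A (j * τ) *ᵥ v := fun j => by
    rw [show ((j + 1 : ℤ) : ℝ) * τ = j * τ + τ by push_cast; ring, qwalk_add, ← mulVec_mulVec,
      h, mulVec_smul]
  induction k using Int.induction_on with
  | zero => simp [qwalk_zero]
  | succ i ih => rw [step, ih, smul_smul, zpow_add_one₀ hc, mul_comm]
  | pred i ih =>
    have hprev := step (-i - 1)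
    rw [sub_add_cancel, ih] at hprev
    rw [zpow_sub_one₀ hc, mul_comm (c ^ _), ← smul_smul, hprev, smul_smul, inv_mul_cancel₀ hc,
      one_smul]

end Walk

section Revival

variable {V : Type*} [Fintype V] [DecidableEq V]

def HasRevival (A : Matrix V V ℝ) (x y : V → ℂ) (t ζ γ : ℝ) : Prop :=
  qwalk A t *ᵥ x = (exp (I * ζ) * Real.cos γ) • x + (I * exp (I * ζ) * Real.sin γ) • y

variable {A : Matrix V V ℝ} {x y : V → ℂ} {t ζ γ : ℝ}

theorem HasRevival.symm_of_commute (h : HasRevival A x y t ζ γ) {T : Matrix V V ℂ}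
    (hT : Commute (qwalk A t) T) (hx : T *ᵥ x = y) (hy : T *ᵥ y = x) :
    HasRevival A y x t ζ γ :=
  calc qwalk A t *ᵥ y = T *ᵥ (qwalk A t *ᵥ x) := by
        rw [← hx, mulVec_mulVec, hT.eq, mulVec_mulVec]
    _ = _ := by rw [h, mulVec_add, mulVec_smul, mulVec_smul, hx, hy, add_comm]

theorem HasRevival.int_mul (hxy : HasRevival A x y t ζ γ) (hyx : HasRevival A y x t ζ γ)
    (k : ℤ) : HasRevival A x y (k * t) (k * ζ) (k * γ) := by
  have hplus : qwalk A t *ᵥ (x + y) = exp (I * ↑(ζ + γ)) • (x + y) := by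
    rw [mulVec_add, hxy, hyx, ← exp_I_mul_add]
    module
  have hminus : qwalk A t *ᵥ (x - y) = exp (I * ↑(ζ - γ)) • (x - y) := by
    rw [mulVec_sub, hxy, hyx, ← exp_I_mul_sub]
    module
  have hpow : ∀ s : ℝ, exp (I * s) ^ k = exp (I * ↑(k * s)) := fun s => by
    rw [← exp_int_mul]
    push_cast
    ring_nf
  have hx : x = (2 : ℂ)⁻¹ • ((x + y) + (x - y)) := by module
  unfold HasRevival
  conv_lhs => rw [hx]
  rw [mulVec_smul, mulVec_add, qwalk_int_mul_mulVec A (exp_ne_zero _) hplus,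
    qwalk_int_mul_mulVec A (exp_ne_zero _) hminus, hpow, hpow, mul_add, mul_sub,
    ← exp_I_mul_add, ← exp_I_mul_sub]
  module

theorem HasRevival.exists_mulVec_eq_smul_self (h : HasRevival A x y t ζ γ)
    (hγ : Real.sin γ = 0) : ∃ μ : ℂ, ‖μ‖ = 1 ∧ qwalk A t *ᵥ x = μ • x := by
  refine ⟨exp (I * ζ) * Real.cos γ, ?_, by rw [h, hγ]; simp⟩
  rcases Real.sin_eq_zero_iff_cos_eq.mp hγ with hc | hc <;> simp [hc, mul_comm I]

theorem HasRevival.exists_mulVec_eq_smul (h : HasRevival A x y t ζ γ)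
    (hγ : Real.cos γ = 0) : ∃ μ : ℂ, ‖μ‖ = 1 ∧ qwalk A t *ᵥ x = μ • y := by
  refine ⟨I * exp (I * ζ) * Real.sin γ, ?_, by rw [h, hγ]; simp⟩
  rcases Real.cos_eq_zero_iff_sin_eq.mp hγ with hs | hs <;> simp [hs, mul_comm I]

end Revival

theorem stmt6_general {n m : ℕ} (A : Matrix (Fin n) (Fin n) ℝ)
    (θ : Fin m → ℝ) (E : Fin m → Matrix (Fin n) (Fin n) ℝ)
    (hdecomp : A = ∑ r, θ r • E r)
    (hsum : ∑ r, E r = 1)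
    (horth : ∀ r s, E r * E s = if r = s then E r else 0)
    (a b : Fin n)
    (hsc : ∀ r, E r *ᵥ eR a = E r *ᵥ eR b ∨ E r *ᵥ eR a = -(E r *ᵥ eR b))
    (τ γ ζ : ℝ) (p q : ℤ) (hq : q ≠ 0) (hcop : IsCoprime p q)
    (hγ : γ = (p / q : ℚ) * Real.pi)
    (hrev : (qwalk A τ) *ᵥ eC a =
        (Complex.exp (Complex.I * ζ) * Real.cos γ) • eC a +
        (Complex.I * Complex.exp (Complex.I * ζ) * Real.sin γ) • eC b) :
    (∃ μ : ℂ, ‖μ‖ = 1 ∧ (qwalk A ((q : ℝ) * τ)) *ᵥ eC a = μ • eC a) ∧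
    (∃ μ : ℂ, ‖μ‖ = 1 ∧ (qwalk A ((q : ℝ) * τ)) *ᵥ eC b = μ • eC b) ∧
    (∀ k : ℤ, q = 2 * k →
      ∃ μ : ℂ, ‖μ‖ = 1 ∧ (qwalk A ((k : ℝ) * τ)) *ᵥ eC a = μ • eC b) := by
  obtain ⟨T, hET, hTa, hTb⟩ := Matrix.exists_swap_of_mulVec_eq_or_eq_neg hsum horth hsc
  have hAT : Commute A T :=
    hdecomp ▸ Commute.sum_left _ _ _ fun r _ => (hET r).smul_left _
  have hab : HasRevival A (eC a) (eC b) τ ζ γ := hrev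
  have hba : HasRevival A (eC b) (eC a) τ ζ γ :=
    hab.symm_of_commute (hAT.qwalk τ) (map_mulVec_eC hTa) (map_mulVec_eC hTb)
  have hqγ : (q : ℝ) * γ = p * Real.pi := by
    rw [hγ]
    push_cast
    field_simp
  refine ⟨(hab.int_mul hba q).exists_mulVec_eq_smul_self (hqγ ▸ Real.sin_int_mul_pi p),
    (hba.int_mul hab q).exists_mulVec_eq_smul_self (hqγ ▸ Real.sin_int_mul_pi p),
    fun k hk => (hab.int_mul hba k).exists_mulVec_eq_smul ?_⟩
  obtain ⟨j, rfl⟩ : Odd p := Int.isCoprime_two_right.mp (hk ▸ hcop).of_mul_right_left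
  rw [hk] at hqγ
  push_cast at hqγ
  exact Real.cos_eq_zero_iff.mpr ⟨j, by linarith⟩

/-- If (e^{iζ}cos γ, i e^{iζ}sin γ)-revival occurs between strongly cospectral vertices
at time τ with γ = (p/q)π for coprime p, q, then the graph is periodic at a and at b at
time qτ; and if q is even, say q = 2m, perfect state transfer occurs at time mτ. -/
theorem stmt6 {n m : ℕ} (A : Matrix (Fin n) (Fin n) ℝ) (hA : A.IsSymm)
    (θ : Fin m → ℝ) (E : Fin m → Matrix (Fin n) (Fin n) ℝ)
    (hdecomp : A = ∑ r, θ r • E r)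
    (hsum : ∑ r, E r = 1)
    (hsymm : ∀ r, (E r).IsSymm)
    (horth : ∀ r s, E r * E s = if r = s then E r else 0)
    (a b : Fin n) (hab : a ≠ b)
    (hsc : ∀ r, E r *ᵥ eR a = E r *ᵥ eR b ∨ E r *ᵥ eR a = -(E r *ᵥ eR b))
    (τ γ ζ : ℝ) (p q : ℤ) (hq : q ≠ 0) (hcop : IsCoprime p q)
    (hγ : γ = (p / q : ℚ) * Real.pi)
    (hβ : Real.sin γ ≠ 0)
    (hrev : (qwalk A τ) *ᵥ eC a =
        (Complex.exp (Complex.I * ζ) * Real.cos γ) • eC a +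
        (Complex.I * Complex.exp (Complex.I * ζ) * Real.sin γ) • eC b) :
    (∃ μ : ℂ, ‖μ‖ = 1 ∧ (qwalk A ((q : ℝ) * τ)) *ᵥ eC a = μ • eC a) ∧
    (∃ μ : ℂ, ‖μ‖ = 1 ∧ (qwalk A ((q : ℝ) * τ)) *ᵥ eC b = μ • eC b) ∧
    (∀ k : ℤ, q = 2 * k →
      ∃ μ : ℂ, ‖μ‖ = 1 ∧ (qwalk A ((k : ℝ) * τ)) *ᵥ eC a = μ • eC b) :=
  stmt6_general A θ E hdecomp hsum horth a b hsc τ γ ζ p q hq hcop hγ hrev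
end

section
/- Let X be a graph periodic at vertex a at time τ (U_X(τ)e_a = γe_a, γ unimodular) with τ < π/2. Then in the Cartesian product X □ K₂, fractional revival occurs at time τ from vertex (a,u) to the pair {(a,u),(a,v)}: U_{X□K₂}(τ)e_{(a,u)} = γcos(τ) e_{(a,u)} − iγsin(τ) e_{(a,v)}, where u,v are the two vertices of K₂. -/
open Matrix Complex BigOperators

open Kronecker

/-!
The two summands of the Kronecker sum `A ⊗ 1 + 1 ⊗ S`, `S = !![0, 1; 1, 0]`, commute, so the walk
on `X □ K₂` factors as `U_X(τ) ⊗ U_{K₂}(τ)`; diagonalising `S` by the Hadamard matrix gives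
`U_{K₂}(τ) = cos τ • 1 - i sin τ • S`. On `e_a ⊗ e_0`, periodicity turns the first factor into
`γ e_a`, and the second contributes the first column of `U_{K₂}(τ)`.
-/

open NormedSpace

namespace Matrix

theorem kronecker_eq_reindex_kronecker {R l m n p : Type*} [CommMagma R]
    (A : Matrix l m R) (B : Matrix n p R) :
    A ⊗ₖ B = reindex (Equiv.prodComm n l) (Equiv.prodComm p m) (B ⊗ₖ A) := by
  ext ⟨i, k⟩ ⟨j, l⟩
  simp [mul_comm]

theorem kronecker_mulVec_single_one {R l m n p : Type*} [CommSemiring R] [Fintype m]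
    [DecidableEq m] [Fintype p] [DecidableEq p] (M : Matrix l m R) (N : Matrix n p R)
    (a : m) (b : p) :
    (M ⊗ₖ N) *ᵥ Pi.single (a, b) 1 = fun x => M x.1 a * N x.2 b := by
  ext x
  simp

section KroneckerExp

variable {𝕜 m n : Type*} [RCLike 𝕜] [Fintype m] [DecidableEq m] [Fintype n] [DecidableEq n]

attribute [local instance] Matrix.linftyOpSemiNormedRing Matrix.linftyOpNormedRing
  Matrix.linftyOpNormedAlgebra

theorem exp_reindex (e : m ≃ n) (M : Matrix m m 𝕜) :
    exp (reindex e e M) = reindex e e (exp M) :=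
  (map_exp (reindexAlgEquiv 𝕜 𝕜 e) (continuous_id.matrix_reindex e e) M).symm

theorem exp_kronecker_one (X : Matrix m m 𝕜) :
    exp (X ⊗ₖ (1 : Matrix n n 𝕜)) = exp X ⊗ₖ (1 : Matrix n n 𝕜) := by
  have hblock (Y : Matrix m m 𝕜) : Y ⊗ₖ (1 : Matrix n n 𝕜) = blockDiagonal fun _ => Y := by
    ext ⟨i, k⟩ ⟨j, l⟩
    simp [blockDiagonal_apply, one_apply, mul_ite]
  rw [hblock, exp_blockDiagonal, hblock]
  exact congrArg blockDiagonal
    (map_exp (Pi.constRingHom n (Matrix m m 𝕜)) (continuous_pi fun _ => continuous_id) X).symm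

theorem exp_one_kronecker (Y : Matrix n n 𝕜) :
    exp ((1 : Matrix m m 𝕜) ⊗ₖ Y) = (1 : Matrix m m 𝕜) ⊗ₖ exp Y := by
  rw [kronecker_eq_reindex_kronecker, exp_reindex, exp_kronecker_one,
    ← kronecker_eq_reindex_kronecker]

theorem exp_kroneckerSum (X : Matrix m m 𝕜) (Y : Matrix n n 𝕜) :
    exp (X ⊗ₖ (1 : Matrix n n 𝕜) + (1 : Matrix m m 𝕜) ⊗ₖ Y) = exp X ⊗ₖ exp Y := by
  have hcomm : Commute (X ⊗ₖ (1 : Matrix n n 𝕜)) ((1 : Matrix m m 𝕜) ⊗ₖ Y) := by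
    simp only [Commute, SemiconjBy, ← mul_kronecker_mul, mul_one, one_mul]
  rw [exp_add_of_commute _ _ hcomm, exp_kronecker_one, exp_one_kronecker, ← mul_kronecker_mul,
    mul_one, one_mul]

end KroneckerExp

theorem exp_smul_swap_fin_two (z : ℂ) :
    exp (z • !![0, 1; 1, 0] : Matrix (Fin 2) (Fin 2) ℂ) =
      !![cosh z, sinh z; sinh z, cosh z] := by
  let U : (Matrix (Fin 2) (Fin 2) ℂ)ˣ :=
    ⟨!![1, 1; 1, -1], !![1 / 2, 1 / 2; 1 / 2, -1 / 2],
      by rw [mul_fin_two, one_fin_two]; norm_num, by rw [mul_fin_two, one_fin_two]; norm_num⟩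
  have hdiag : z • (!![0, 1; 1, 0] : Matrix (Fin 2) (Fin 2) ℂ) =
      U * diagonal ![z, -z] * (↑U⁻¹ : Matrix (Fin 2) (Fin 2) ℂ) := by
    rw [diagonal_fin_two]
    simp only [U, Units.inv_mk, mul_fin_two]
    ext i j; fin_cases i <;> fin_cases j <;> simp <;> ring
  rw [hdiag, exp_units_conj, exp_diagonal, Pi.exp_def]
  simp only [U, Units.inv_mk, diagonal_fin_two, mul_fin_two]
  ext i j; fin_cases i <;> fin_cases j <;> simp [← exp_eq_exp_ℂ, ← cosh_add_sinh] <;> ring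

end Matrix

theorem qwalk_kroneckerSum {V W : Type*} [Fintype V] [DecidableEq V] [Fintype W] [DecidableEq W]
    (A : Matrix V V ℝ) (B : Matrix W W ℝ) (t : ℝ) :
    qwalk (A ⊗ₖ (1 : Matrix W W ℝ) + (1 : Matrix V V ℝ) ⊗ₖ B) t = qwalk A t ⊗ₖ qwalk B t := by
  have hmap : (A ⊗ₖ (1 : Matrix W W ℝ) + (1 : Matrix V V ℝ) ⊗ₖ B).map (fun x : ℝ => (x : ℂ)) =
      A.map (↑) ⊗ₖ (1 : Matrix W W ℂ) + (1 : Matrix V V ℂ) ⊗ₖ B.map (↑) := by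
    ext ⟨i, k⟩ ⟨j, l⟩
    simp only [map_apply, Matrix.add_apply, kroneckerMap_apply, one_apply]
    split_ifs <;> simp
  rw [qwalk, hmap, smul_add, ← smul_kronecker, ← kronecker_smul, exp_kroneckerSum]
  rfl

theorem qwalk_swap_fin_two (t : ℝ) :
    qwalk !![0, 1; 1, 0] t =
      !![(Real.cos t : ℂ), -I * Real.sin t; -I * Real.sin t, Real.cos t] := by
  have hmap : (!![0, 1; 1, 0] : Matrix (Fin 2) (Fin 2) ℝ).map (fun x : ℝ => (x : ℂ)) =
      !![0, 1; 1, 0] := by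
    ext i j; fin_cases i <;> fin_cases j <;> simp
  rw [qwalk, hmap, exp_smul_swap_fin_two, show -(I * t) = (-t : ℂ) * I by ring, cosh_mul_I,
    sinh_mul_I]
  ext i j; fin_cases i <;> fin_cases j <;> simp [mul_comm]

theorem stmt9_general {n : ℕ} (A : Matrix (Fin n) (Fin n) ℝ) (a : Fin n) (τ : ℝ) (γ : ℂ)
    (hper : (qwalk A τ) *ᵥ eC a = γ • eC a) :
    (qwalk (A ⊗ₖ (1 : Matrix (Fin 2) (Fin 2) ℝ) +
        (1 : Matrix (Fin n) (Fin n) ℝ) ⊗ₖ !![0, 1; 1, 0]) τ) *ᵥ eC (a, (0 : Fin 2)) =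
      (γ * Real.cos τ) • eC (a, (0 : Fin 2)) +
      (-(Complex.I) * γ * Real.sin τ) • eC (a, (1 : Fin 2)) := by
  have hcol (i : Fin n) : qwalk A τ i a = γ * eC a i := by
    simpa [eC] using congrFun hper i
  rw [qwalk_kroneckerSum, eC, kronecker_mulVec_single_one, qwalk_swap_fin_two]
  ext ⟨i, j⟩
  by_cases hi : i = a <;> fin_cases j <;> simp [hcol, eC, hi]
  ring

/-- If X is periodic at a at time τ < π/2, then X □ K₂ has fractional revival at time τ
from (a,u) to the pair {(a,u),(a,v)}:
U(τ) e_{(a,u)} = γ cos τ · e_{(a,u)} − iγ sin τ · e_{(a,v)}. -/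
theorem stmt9 {n : ℕ} (A : Matrix (Fin n) (Fin n) ℝ) (hA : A.IsSymm)
    (a : Fin n) (τ : ℝ) (hτ0 : 0 < τ) (hτ : τ < Real.pi / 2)
    (γ : ℂ) (hγ : ‖γ‖ = 1)
    (hper : (qwalk A τ) *ᵥ eC a = γ • eC a) :
    (qwalk (A ⊗ₖ (1 : Matrix (Fin 2) (Fin 2) ℝ) +
        (1 : Matrix (Fin n) (Fin n) ℝ) ⊗ₖ !![0, 1; 1, 0]) τ) *ᵥ eC (a, (0 : Fin 2)) =
      (γ * Real.cos τ) • eC (a, (0 : Fin 2)) +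
      (-(Complex.I) * γ * Real.sin τ) • eC (a, (1 : Fin 2)) :=
  stmt9_general A a τ γ hper
end

section
/- Let X have perfect state transfer from a to b at time τ < π/2, and let Y be a graph on the same vertex set whose adjacency matrix commutes with that of X and in which (a,b) is an isolated edge (A(Y)e_b = e_a and A(Y)e_a = e_b). Then U_{X∪Y}(τ)e_a = γ(cos(τ)e_b − i sin(τ)e_a) for some unimodular γ; in particular fractional revival occurs between a and b in X ∪ Y. -/
open Matrix Complex BigOperators

/-!
Since `A(X)` and `A(Y)` commute, `U_{X∪Y}(τ) = U_Y(τ) U_X(τ)`, so `U_{X∪Y}(τ) e_a = γ U_Y(τ) e_b`.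
On an isolated edge, `e_a ± e_b` are eigenvectors of `A(Y)` with eigenvalues `±1`, hence
`U_Y(τ) e_b = cos τ e_b - i sin τ e_a`. The coefficient `γ cos τ` of `e_b` is nonzero for
`0 < τ < π/2`, which is fractional revival.
-/

open NormedSpace

theorem eC_eq_ofReal_comp_eR {V : Type*} [DecidableEq V] (a : V) : eC a = (↑) ∘ eR a := by
  funext i
  by_cases h : i = a <;> simp [eC, eR, h]

section

variable {V : Type*} [Fintype V] [DecidableEq V]

theorem Matrix.pow_mulVec_of_mulVec_eq_smul {M : Matrix V V ℂ} {v : V → ℂ} {μ : ℂ}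
    (h : M *ᵥ v = μ • v) (k : ℕ) : (M ^ k) *ᵥ v = μ ^ k • v := by
  induction k with
  | zero => simp
  | succ k ih => rw [pow_succ, ← mulVec_mulVec, h, mulVec_smul, ih, smul_smul, pow_succ']

open scoped Norms.Operator in
theorem Matrix.exp_mulVec_of_mulVec_eq_smul {M : Matrix V V ℂ} {v : V → ℂ} {μ : ℂ}
    (h : M *ᵥ v = μ • v) : exp M *ᵥ v = Complex.exp μ • v := by
  let L : Matrix V V ℂ →L[ℂ] (V → ℂ) :=
    LinearMap.toContinuousLinearMap ((mulVecBilin ℂ ℂ).flip v)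
  have hM := (exp_series_hasSum_exp' (𝕂 := ℂ) M).mapL L
  simp only [L, LinearMap.coe_toContinuousLinearMap', LinearMap.flip_apply, mulVecBilin_apply,
    smul_mulVec, pow_mulVec_of_mulVec_eq_smul h, smul_smul] at hM
  rw [Complex.exp_eq_exp_ℂ]
  exact hM.unique ((exp_series_hasSum_exp' (𝕂 := ℂ) μ).smul_const v)

theorem qwalk_mulVec_of_mulVec_eq_smul {A : Matrix V V ℝ} {v : V → ℂ} {μ : ℂ}
    (h : A.map (↑) *ᵥ v = μ • v) (t : ℝ) :
    qwalk A t *ᵥ v = Complex.exp (-(I * t) * μ) • v :=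
  exp_mulVec_of_mulVec_eq_smul (by rw [smul_mulVec, h, smul_smul])

theorem qwalk_add_of_commute {A B : Matrix V V ℝ} (h : Commute A B) (t : ℝ) :
    qwalk (A + B) t = qwalk A t * qwalk B t := by
  have hC : Commute (A.map ((↑) : ℝ → ℂ)) (B.map (↑)) := h.map (Complex.ofRealHom.mapMatrix)
  rw [qwalk, Matrix.map_add _ Complex.ofReal_add, smul_add]
  exact exp_add_of_commute _ _ ((hC.smul_left _).smul_right _)

theorem map_ofReal_mulVec_eC {B : Matrix V V ℝ} {a b : V} (h : B *ᵥ eR a = eR b) :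
    B.map (↑) *ᵥ eC a = eC b := by
  funext i
  rw [eC_eq_ofReal_comp_eR, eC_eq_ofReal_comp_eR, ← h]
  exact (RingHom.map_mulVec Complex.ofRealHom B (eR a) i).symm

theorem qwalk_mulVec_eC_of_isolated_edge {B : Matrix V V ℝ} {a b : V}
    (hBa : B *ᵥ eR a = eR b) (hBb : B *ᵥ eR b = eR a) (t : ℝ) :
    qwalk B t *ᵥ eC b = (Real.cos t : ℂ) • eC b + (-I * Real.sin t) • eC a := by
  have hplus : qwalk B t *ᵥ (eC a + eC b) = Complex.exp (-(I * t) * 1) • (eC a + eC b) :=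
    qwalk_mulVec_of_mulVec_eq_smul (by
      rw [mulVec_add, map_ofReal_mulVec_eC hBa, map_ofReal_mulVec_eC hBb, one_smul, add_comm]) t
  have hminus : qwalk B t *ᵥ (eC a - eC b) = Complex.exp (-(I * t) * -1) • (eC a - eC b) :=
    qwalk_mulVec_of_mulVec_eq_smul (by
      rw [mulVec_sub, map_ofReal_mulVec_eC hBa, map_ofReal_mulVec_eC hBb, neg_one_smul,
        neg_sub]) t
  have hb : eC b = (2⁻¹ : ℂ) • ((eC a + eC b) - (eC a - eC b)) := by module
  have hexp : Complex.exp (-(I * t) * 1) = Real.cos t - I * Real.sin t := by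
    rw [mul_one, show -(I * t) = (-t : ℂ) * I by ring, exp_mul_I, cos_neg, sin_neg, ofReal_cos,
      ofReal_sin]
    ring
  have hexp' : Complex.exp (-(I * t) * -1) = Real.cos t + I * Real.sin t := by
    rw [mul_neg_one, neg_neg, mul_comm, exp_mul_I, ofReal_cos, ofReal_sin]
    ring
  rw [hb, mulVec_smul, mulVec_sub, hplus, hminus, hexp, hexp']
  module

end

theorem stmt10_general {n : ℕ} (A B : Matrix (Fin n) (Fin n) ℝ)
    (hcomm : A * B = B * A)
    (a b : Fin n)
    (hBa : B *ᵥ eR a = eR b) (hBb : B *ᵥ eR b = eR a)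
    (τ : ℝ) (hτ0 : 0 < τ) (hτ : τ < Real.pi / 2)
    (γ : ℂ) (hγ : ‖γ‖ = 1)
    (hpst : (qwalk A τ) *ᵥ eC a = γ • eC b) :
    (qwalk (A + B) τ) *ᵥ eC a =
      (γ * Real.cos τ) • eC b + (-(Complex.I) * γ * Real.sin τ) • eC a ∧
    ∃ α β : ℂ, β ≠ 0 ∧ ‖α‖ ^ 2 + ‖β‖ ^ 2 = 1 ∧
      (qwalk (A + B) τ) *ᵥ eC a = α • eC a + β • eC b := by
  have hevolve : qwalk (A + B) τ *ᵥ eC a =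
      (γ * Real.cos τ) • eC b + (-I * γ * Real.sin τ) • eC a := by
    rw [add_comm, qwalk_add_of_commute hcomm.symm, ← mulVec_mulVec, hpst, mulVec_smul,
      qwalk_mulVec_eC_of_isolated_edge hBa hBb]
    module
  have hγ0 : γ ≠ 0 := norm_ne_zero_iff.mp (by rw [hγ]; exact one_ne_zero)
  have hcos : Real.cos τ ≠ 0 := (Real.cos_pos_of_mem_Ioo ⟨by linarith [Real.pi_pos], hτ⟩).ne'
  refine ⟨hevolve, -I * γ * Real.sin τ, γ * Real.cos τ, mul_ne_zero hγ0 (ofReal_ne_zero.mpr hcos),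
    ?_, by rw [hevolve, add_comm]⟩
  simp only [norm_mul, norm_neg, norm_I, norm_real, Real.norm_eq_abs, hγ, one_mul, sq_abs,
    Real.sin_sq_add_cos_sq]

/-- Perfect state transfer in X at time τ < π/2 plus a commuting graph Y in which (a,b)
is an isolated edge yields fractional revival between a and b in X ∪ Y. -/
theorem stmt10 {n : ℕ} (A B : Matrix (Fin n) (Fin n) ℝ)
    (hA : A.IsSymm) (hB : B.IsSymm) (hcomm : A * B = B * A)
    (a b : Fin n) (hab : a ≠ b)
    (hBa : B *ᵥ eR a = eR b) (hBb : B *ᵥ eR b = eR a)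
    (τ : ℝ) (hτ0 : 0 < τ) (hτ : τ < Real.pi / 2)
    (γ : ℂ) (hγ : ‖γ‖ = 1)
    (hpst : (qwalk A τ) *ᵥ eC a = γ • eC b) :
    (qwalk (A + B) τ) *ᵥ eC a =
      (γ * Real.cos τ) • eC b + (-(Complex.I) * γ * Real.sin τ) • eC a ∧
    ∃ α β : ℂ, β ≠ 0 ∧ ‖α‖ ^ 2 + ‖β‖ ^ 2 = 1 ∧
      (qwalk (A + B) τ) *ᵥ eC a = α • eC a + β • eC b :=
  stmt10_general A B hcomm a b hBa hBb τ hτ0 hτ γ hγ hpst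
end

section
/- If fractional revival occurs from a to b at time τ in a graph X, then every automorphism of X fixing a also fixes b; hence Aut_X(a) = Aut_X(b). -/
open Matrix Complex BigOperators

/-! An automorphism `σ` commutes with `U(τ)`, so it carries an `(α, β)`-revival from `a` to `b`
to one from `σ a` to `σ b`. If `σ` fixes `a`, comparing the two revivals from `a` gives
`σ b = b`. If `σ` fixes `b` but moves `a`, then `U(τ)` maps `e_a - e_{σ a}` to `α` times itself;
a unitary has only eigenvalues of modulus one, so `|α| = 1` and hence `β = 0`. -/

theorem eC_injective {V : Type*} [DecidableEq V] : Function.Injective (eC : V → V → ℂ) := by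
  intro a b h
  simpa [eC, Pi.single_apply, eq_comm] using congrFun h b

theorem SimpleGraph.adjMatrix_submatrix_iso {V R : Type*} (G : SimpleGraph V) [DecidableRel G.Adj]
    [Zero R] [One R] (σ : G ≃g G) : (G.adjMatrix R).submatrix σ σ = G.adjMatrix R := by
  ext i j
  simp [adjMatrix_apply, σ.map_adj_iff]

section QuantumWalk

variable {V : Type*} [Fintype V] [DecidableEq V]

theorem Matrix.commute_toMatrix_toPEquiv {R : Type*} [Semiring R] {A : Matrix V V R} {σ : V ≃ V}
    (hσ : A.submatrix σ σ = A) : Commute σ.toPEquiv.toMatrix A := by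
  rw [Commute, SemiconjBy, PEquiv.toMatrix_toPEquiv_mul, PEquiv.mul_toMatrix_toPEquiv]
  ext i j
  simpa using congrFun₂ hσ i (σ.symm j)

theorem toMatrix_toPEquiv_symm_mulVec_eC (σ : V ≃ V) (c : V) :
    σ.symm.toPEquiv.toMatrix *ᵥ eC c = eC (σ c) := by
  ext i
  simp [eC, PEquiv.toMatrix_apply, Pi.single_apply, Equiv.symm_apply_eq]

open scoped ComplexOrder in
theorem Matrix.norm_eq_one_of_mem_unitary_of_mulVec_eq_smul {U : Matrix V V ℂ}
    (hU : U ∈ unitary (Matrix V V ℂ)) {μ : ℂ} {v : V → ℂ} (hv : v ≠ 0) (h : U *ᵥ v = μ • v) :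
    ‖μ‖ = 1 := by
  have hvv : star v ⬝ᵥ v ≠ 0 := dotProduct_star_self_eq_zero.not.mpr hv
  have hUv : star (U *ᵥ v) ⬝ᵥ (U *ᵥ v) = star v ⬝ᵥ v := by
    rw [star_mulVec, dotProduct_mulVec, vecMul_vecMul, ← star_eq_conjTranspose,
      Unitary.star_mul_self_of_mem hU, vecMul_one]
  rw [h, star_smul, smul_dotProduct, dotProduct_smul, smul_smul] at hUv
  have hμ : ((‖μ‖ ^ 2 : ℝ) : ℂ) = 1 := by
    rw [Complex.ofReal_pow, ← Complex.conj_mul']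
    simpa [hvv] using hUv
  exact (pow_eq_one_iff_of_nonneg (norm_nonneg μ) two_ne_zero).mp (mod_cast hμ)

theorem qwalk_mem_unitary {A : Matrix V V ℝ} (hA : A.IsSymm) (t : ℝ) :
    qwalk A t ∈ unitary (Matrix V V ℂ) := by
  set M : Matrix V V ℂ := (-(Complex.I * (t : ℂ))) • A.map (fun x => (x : ℂ))
  have hM : star M = -M := by
    ext i j
    simp [M, hA.apply i j]
  change NormedSpace.exp M ∈ _
  rw [Unitary.mem_iff, NormedSpace.star_exp, hM,
    ← Matrix.exp_add_of_commute _ _ (Commute.refl M).neg_left,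
    ← Matrix.exp_add_of_commute _ _ (Commute.refl M).neg_right,
    neg_add_cancel, add_neg_cancel, NormedSpace.exp_zero, and_self]

theorem commute_toMatrix_toPEquiv_qwalk {A : Matrix V V ℝ} {σ : V ≃ V}
    (hσ : A.submatrix σ σ = A) (t : ℝ) : Commute σ.toPEquiv.toMatrix (qwalk A t) := by
  have hAσ : (A.map ((↑) : ℝ → ℂ)).submatrix σ σ = A.map (↑) := by rw [submatrix_map, hσ]
  exact ((commute_toMatrix_toPEquiv hAσ).smul_right _).exp_right

theorem qwalk_mulVec_eC_apply_equiv {A : Matrix V V ℝ} {σ : V ≃ V} (hσ : A.submatrix σ σ = A)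
    {t : ℝ} {α β : ℂ} {a b : V} (hrev : qwalk A t *ᵥ eC a = α • eC a + β • eC b) :
    qwalk A t *ᵥ eC (σ a) = α • eC (σ a) + β • eC (σ b) := by
  have hσ' : A.submatrix σ.symm σ.symm = A := by
    conv_lhs => rw [← hσ]
    simp
  rw [← toMatrix_toPEquiv_symm_mulVec_eC, mulVec_mulVec,
    ← (commute_toMatrix_toPEquiv_qwalk hσ' t).eq, ← mulVec_mulVec, hrev, mulVec_add,
    mulVec_smul, mulVec_smul, toMatrix_toPEquiv_symm_mulVec_eC, toMatrix_toPEquiv_symm_mulVec_eC]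

theorem eq_of_revival_to_common_target {U : Matrix V V ℂ} (hU : U ∈ unitary (Matrix V V ℂ))
    {α β : ℂ} (hβ : β ≠ 0) (hnorm : ‖α‖ ^ 2 + ‖β‖ ^ 2 = 1) {a b c : V}
    (ha : U *ᵥ eC a = α • eC a + β • eC b) (hc : U *ᵥ eC c = α • eC c + β • eC b) :
    a = c := by
  by_contra hac
  have hw : U *ᵥ (eC a - eC c) = α • (eC a - eC c) := by
    rw [mulVec_sub, ha, hc, smul_sub]
    abel
  have hα := norm_eq_one_of_mem_unitary_of_mulVec_eq_smul hU
    (sub_ne_zero.mpr (eC_injective.ne hac)) hw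
  simp [hα, hβ] at hnorm

end QuantumWalk

theorem stmt13_general {n : ℕ} (G : SimpleGraph (Fin n)) [DecidableRel G.Adj]
    (a b : Fin n) (τ : ℝ) (α β : ℂ) (hβ : β ≠ 0)
    (hnorm : ‖α‖ ^ 2 + ‖β‖ ^ 2 = 1)
    (hrev : (qwalk (G.adjMatrix ℝ) τ) *ᵥ eC a = α • eC a + β • eC b) :
    ∀ σ : G ≃g G, (σ a = a ↔ σ b = b) := by
  intro σ
  have hrevσ := qwalk_mulVec_eC_apply_equiv (G.adjMatrix_submatrix_iso σ) (σ := σ.toEquiv) hrev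
  constructor
  · intro ha
    rw [RelIso.coe_fn_toEquiv, ha, hrev] at hrevσ
    exact (eC_injective (smul_right_injective _ hβ (add_left_cancel hrevσ))).symm
  · intro hb
    rw [RelIso.coe_fn_toEquiv, hb] at hrevσ
    exact (eq_of_revival_to_common_target (qwalk_mem_unitary G.isSymm_adjMatrix τ) hβ hnorm
      hrev hrevσ).symm

/-- If fractional revival occurs from a to b in a graph X, then every automorphism
fixing a also fixes b (and conversely), i.e. Aut_X(a) = Aut_X(b). -/
theorem stmt13 {n : ℕ} (G : SimpleGraph (Fin n)) [DecidableRel G.Adj]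
    (a b : Fin n) (hab : a ≠ b) (τ : ℝ) (α β : ℂ) (hβ : β ≠ 0)
    (hnorm : ‖α‖ ^ 2 + ‖β‖ ^ 2 = 1)
    (hrev : (qwalk (G.adjMatrix ℝ) τ) *ᵥ eC a = α • eC a + β • eC b) :
    ∀ σ : G ≃g G, (σ a = a ↔ σ b = b) :=
  stmt13_general G a b τ α β hβ hnorm hrev
end

section
/- The path P₄ admits (−cos(π/√5), i sin(π/√5))-revival between vertices 1 and 4 (and between 2 and 3) at time 2π/√5: exp(-i(2π/√5)A(P₄)) e_1 = −cos(π/√5) e_1 + i sin(π/√5) e_4. -/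
open Matrix Complex BigOperators

/-!
Write `A` for the adjacency matrix of `P₄` and `J` for the permutation matrix of the reflection
`i ↦ i.rev` of the path. The matrix `K = (2A - J) / √5` is the sign of `A`, so
`A = J/2 + (√5/2) K` with `J`, `K` commuting involutions. For an involution `X`,
`exp (-iθX) = cos θ - i sin θ X`; at `t = 2π/√5` the factor `exp (-i(t√5/2) K) = exp (-iπK)`
is `-1`, leaving `U(t) = -cos(π/√5) + i sin(π/√5) J`.
-/

open NormedSpace
open scoped Nat

section Involution

variable {𝔸 : Type*} [Ring 𝔸] [Algebra ℂ 𝔸] [TopologicalSpace 𝔸] [IsTopologicalRing 𝔸]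
  [ContinuousSMul ℂ 𝔸] [T2Space 𝔸]

theorem exp_smul_eq_cosh_add_sinh_of_mul_self_eq_one {J : 𝔸} (hJ : J * J = 1) (z : ℂ) :
    exp (z • J) = Complex.cosh z • 1 + Complex.sinh z • J := by
  have hJ2 : ∀ n : ℕ, J ^ (2 * n) = 1 := fun n => by rw [pow_mul, sq, hJ, one_pow]
  have hterm : ∀ n : ℕ, ((n ! : ℂ)⁻¹) • (z • J) ^ n = (z ^ n / n !) • J ^ n := fun n => by
    rw [smul_pow, smul_smul, inv_mul_eq_div]
  rw [exp_eq_tsum (𝕂 := ℂ)]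
  refine HasSum.tsum_eq (HasSum.even_add_odd ?_ ?_)
  · convert (Complex.hasSum_cosh z).smul_const (1 : 𝔸) using 2 with n
    rw [hterm, hJ2]
  · convert (Complex.hasSum_sinh z).smul_const J using 2 with n
    rw [hterm, pow_succ, pow_succ J, hJ2, one_mul]

theorem exp_neg_I_mul_smul_of_mul_self_eq_one {J : 𝔸} (hJ : J * J = 1) (θ : ℂ) :
    exp ((-(I * θ)) • J) = cos θ • 1 - (I * sin θ) • J := by
  rw [exp_smul_eq_cosh_add_sinh_of_mul_self_eq_one hJ, show -(I * θ) = -θ * I by ring,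
    cosh_mul_I, sinh_mul_I, cos_neg, sin_neg, neg_mul, mul_comm, neg_smul, sub_eq_add_neg]

end Involution

def pathFourAdj : Matrix (Fin 4) (Fin 4) ℂ := !![0, 1, 0, 0; 1, 0, 1, 0; 0, 1, 0, 1; 0, 0, 1, 0]

def pathFourFlip : Matrix (Fin 4) (Fin 4) ℂ := !![0, 0, 0, 1; 0, 0, 1, 0; 0, 1, 0, 0; 1, 0, 0, 0]

noncomputable def pathFourSign : Matrix (Fin 4) (Fin 4) ℂ :=
  ((Real.sqrt 5 : ℂ)⁻¹) • (2 • pathFourAdj - pathFourFlip)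

theorem pathFourFlip_mul_self : pathFourFlip * pathFourFlip = 1 := by
  ext i j
  fin_cases i <;> fin_cases j <;> simp [pathFourFlip, mul_apply, Fin.sum_univ_four]

theorem commute_pathFourAdj_pathFourFlip : Commute pathFourAdj pathFourFlip := by
  ext i j
  fin_cases i <;> fin_cases j <;>
    simp [pathFourAdj, pathFourFlip, mul_apply, Fin.sum_univ_four]

theorem pathFourAdj_mul_self : pathFourAdj * pathFourAdj = pathFourAdj * pathFourFlip + 1 := by
  ext i j
  fin_cases i <;> fin_cases j <;>
    simp [pathFourAdj, pathFourFlip, mul_apply, Fin.sum_univ_four, one_apply]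

theorem sqrt_five_ne_zero : (Real.sqrt 5 : ℂ) ≠ 0 := by
  exact_mod_cast (Real.sqrt_pos.mpr (by norm_num : (0 : ℝ) < 5)).ne'

theorem sqrt_five_mul_self : (Real.sqrt 5 : ℂ) * Real.sqrt 5 = 5 := by
  exact_mod_cast Real.mul_self_sqrt (by norm_num : (0 : ℝ) ≤ 5)

theorem pathFourSign_mul_self : pathFourSign * pathFourSign = 1 := by
  have hsq :
      (2 • pathFourAdj - pathFourFlip) * (2 • pathFourAdj - pathFourFlip) = (5 : ℂ) • 1 := by
    calc _ = 4 • (pathFourAdj * pathFourAdj) - 2 • (pathFourAdj * pathFourFlip)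
          - 2 • (pathFourFlip * pathFourAdj) + pathFourFlip * pathFourFlip := by noncomm_ring
      _ = (5 : ℂ) • 1 := by
          rw [← commute_pathFourAdj_pathFourFlip.eq, pathFourAdj_mul_self, pathFourFlip_mul_self]
          module
  rw [pathFourSign, smul_mul_smul_comm, hsq, smul_smul, ← mul_inv, sqrt_five_mul_self,
    inv_mul_cancel₀ (by norm_num), one_smul]

theorem commute_pathFourFlip_pathFourSign : Commute pathFourFlip pathFourSign :=
  ((commute_pathFourAdj_pathFourFlip.symm.smul_right 2).sub_right (Commute.refl _)).smul_right _

theorem pathFourAdj_eq :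
    pathFourAdj = (1 / 2 : ℂ) • pathFourFlip + ((Real.sqrt 5 : ℂ) / 2) • pathFourSign := by
  rw [pathFourSign, smul_smul,
    show (Real.sqrt 5 : ℂ) / 2 * (Real.sqrt 5 : ℂ)⁻¹ = 1 / 2 by field_simp [sqrt_five_ne_zero]]
  module

theorem pathFourFlip_mulVec_eC (i : Fin 4) : pathFourFlip *ᵥ eC i = eC i.rev := by
  ext j
  fin_cases i <;> fin_cases j <;>
    simp [pathFourFlip, eC, mulVec, dotProduct, Fin.sum_univ_four, Fin.rev]

theorem qwalk_pathFour_revival :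
    qwalk (!![0, 1, 0, 0; 1, 0, 1, 0; 0, 1, 0, 1; 0, 0, 1, 0] : Matrix (Fin 4) (Fin 4) ℝ)
        (2 * Real.pi / Real.sqrt 5) =
      (-(Real.cos (Real.pi / Real.sqrt 5)) : ℂ) • 1 +
        (I * Real.sin (Real.pi / Real.sqrt 5)) • pathFourFlip := by
  have hmap : (!![0, 1, 0, 0; 1, 0, 1, 0; 0, 1, 0, 1; 0, 0, 1, 0] :
      Matrix (Fin 4) (Fin 4) ℝ).map (fun x => (x : ℂ)) = pathFourAdj := by
    ext i j
    fin_cases i <;> fin_cases j <;> simp [pathFourAdj]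
  have hsplit : (-(I * ((2 * Real.pi / Real.sqrt 5 : ℝ) : ℂ))) • pathFourAdj =
      (-(I * (Real.pi / Real.sqrt 5 : ℂ))) • pathFourFlip + (-(I * Real.pi)) • pathFourSign := by
    rw [pathFourAdj_eq]
    push_cast
    match_scalars <;> field_simp [sqrt_five_ne_zero]
  have hcomm : Commute ((-(I * (Real.pi / Real.sqrt 5 : ℂ))) • pathFourFlip)
      ((-(I * Real.pi)) • pathFourSign) :=
    (commute_pathFourFlip_pathFourSign.smul_left _).smul_right _
  rw [qwalk, hmap, hsplit, Matrix.exp_add_of_commute _ _ hcomm,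
    exp_neg_I_mul_smul_of_mul_self_eq_one pathFourFlip_mul_self,
    exp_neg_I_mul_smul_of_mul_self_eq_one pathFourSign_mul_self, cos_pi, sin_pi, mul_zero,
    zero_smul, sub_zero, neg_one_smul, mul_neg, mul_one]
  push_cast
  module

/-- The path P₄ admits (−cos(π/√5), i sin(π/√5))-revival between vertices 1 and 4, and
between vertices 2 and 3, at time 2π/√5. -/
theorem stmt18 :
    (qwalk (!![0, 1, 0, 0; 1, 0, 1, 0; 0, 1, 0, 1; 0, 0, 1, 0] : Matrix (Fin 4) (Fin 4) ℝ)
        (2 * Real.pi / Real.sqrt 5)) *ᵥ eC (0 : Fin 4) =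
      (-(Real.cos (Real.pi / Real.sqrt 5)) : ℂ) • eC (0 : Fin 4) +
      (Complex.I * Real.sin (Real.pi / Real.sqrt 5)) • eC (3 : Fin 4) ∧
    (qwalk (!![0, 1, 0, 0; 1, 0, 1, 0; 0, 1, 0, 1; 0, 0, 1, 0] : Matrix (Fin 4) (Fin 4) ℝ)
        (2 * Real.pi / Real.sqrt 5)) *ᵥ eC (1 : Fin 4) =
      (-(Real.cos (Real.pi / Real.sqrt 5)) : ℂ) • eC (1 : Fin 4) +
      (Complex.I * Real.sin (Real.pi / Real.sqrt 5)) • eC (2 : Fin 4) := by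
  simp only [qwalk_pathFour_revival, add_mulVec, smul_mulVec, one_mulVec, pathFourFlip_mulVec_eC]
  exact ⟨rfl, rfl⟩
end
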